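/- arXiv:2307.08135 — 5 statements merged into one kernel-verified Lean document; each statement's English description precedes it below -/
import Mathlib

section
/- For every α ∈ (0,1), every positive integer m, and every integer t with 1 ≤ t ≤ r_{α,m}/2, the closed interval I^{(t)} = [ (r_{α,m}/2 − t)·((1+α)/2)^m + (t+1)·((1+α)/2)^m·((3−α)/2)^m + (r_{α,m}/2 − 1) , (r_{α,m}/2 − t)·((1+α)/2)^m + (t−1)·((1+α)/2)^m·((3−α)/2)^m + (r_{α,m}/2 + 1) ] is contained in Γ_{α,m}. -/
open scoped BigOperators

/-- The central Cantor set `C_α ⊆ [0,1]`: the set of all sums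
`Σ_{n} ε_n · ((1+α)/2) · ((1−α)/2)^n` with `ε_n ∈ {0,1}`. -/
noncomputable def centralCantor (α : ℝ) : Set ℝ :=
  {x | ∃ ε : ℕ → ℝ, (∀ n, ε n = 0 ∨ ε n = 1) ∧
    x = ∑' n : ℕ, ε n * ((1 + α) / 2) * ((1 - α) / 2) ^ n}

/-- `s_{α,m} = ⌈(2/(1+α))^{m−1}⌉`. -/
noncomputable def sCount (α : ℝ) (m : ℕ) : ℕ := ⌈(2 / (1 + α)) ^ (m - 1)⌉₊

/-- `k_{α,m}`. -/
noncomputable def kCount (α : ℝ) (m : ℕ) : ℕ :=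
  if 1 / 3 < α then
    ⌈((3 * α - 1) / 2) / (((1 + α) / 2) ^ (m - 1) * ((1 - α ^ 2) / 4))⌉₊
  else 0

/-- `r_{α,m} = 2 s_{α,m} + 2 k_{α,m}`. -/
noncomputable def rCount (α : ℝ) (m : ℕ) : ℕ := 2 * sCount α m + 2 * kCount α m

/-- `Γ_{α,m}`: sums of `r_{α,m}` many `m`-th powers of elements of `C_α`. -/
noncomputable def Gam (α : ℝ) (m : ℕ) : Set ℝ :=
  {x | ∃ c : Fin (rCount α m) → ℝ, (∀ i, c i ∈ centralCantor α) ∧ x = ∑ i, c i ^ m}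

noncomputable def pa (α : ℝ) : ℝ := (1+α)/2
noncomputable def qa (α : ℝ) : ℝ := (1-α)/2

section prelim
variable {α : ℝ}

lemma pa_add_qa : pa α + qa α = 1 := by unfold pa qa; ring
lemma pa_sub_qa : pa α - qa α = α := by unfold pa qa; ring
lemma qa_pos (h : α < 1) : 0 < qa α := by unfold qa; linarith
lemma qa_lt_one (h : 0 < α) : qa α < 1 := by unfold qa; linarith
lemma pa_pos (h : 0 < α) : 0 < pa α := by unfold pa; linarith
lemma pa_lt_one (h : α < 1) : pa α < 1 := by unfold pa; linarith

/-- upper bound : b^m - a^m ≤ m (b-a) for 0 ≤ a ≤ b ≤ 1 -/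
lemma pow_sub_pow_le (m : ℕ) {a b : ℝ} (h0 : 0 ≤ a) (hab : a ≤ b) (hb : b ≤ 1) :
    b^m - a^m ≤ m * (b - a) := by
  rw [← geom_sum₂_mul b a m]
  have hba : 0 ≤ b - a := by linarith
  have : (∑ i ∈ Finset.range m, b ^ i * a ^ (m - 1 - i)) ≤ m := by
    calc (∑ i ∈ Finset.range m, b ^ i * a ^ (m - 1 - i))
        ≤ ∑ _i ∈ Finset.range m, (1:ℝ) := by
          apply Finset.sum_le_sum
          intro i _
          have h1 : b ^ i ≤ 1 := pow_le_one₀ (le_trans h0 hab) hb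
          have h2 : a ^ (m-1-i) ≤ 1 := pow_le_one₀ h0 (le_trans hab hb)
          have := mul_le_mul h1 h2 (pow_nonneg h0 _) zero_le_one
          simpa using this
      _ = m := by simp
  nlinarith [this]

/-- lower bound : m (b-a) c^(m-1) ≤ b^m - a^m for 0 ≤ c ≤ a ≤ b -/
lemma pow_sub_pow_ge (m : ℕ) {a b c : ℝ} (hc : 0 ≤ c) (hca : c ≤ a) (hab : a ≤ b) :
    (m:ℝ) * (b - a) * c^(m-1) ≤ b^m - a^m := by
  rw [← geom_sum₂_mul b a m]
  have ha : 0 ≤ a := le_trans hc hca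
  have hba : 0 ≤ b - a := by linarith
  have : (m:ℝ) * c^(m-1) ≤ (∑ i ∈ Finset.range m, b ^ i * a ^ (m - 1 - i)) := by
    calc (m:ℝ) * c^(m-1) = ∑ _i ∈ Finset.range m, c^(m-1) := by simp [mul_comm]
      _ ≤ ∑ i ∈ Finset.range m, b ^ i * a ^ (m - 1 - i) := by
          apply Finset.sum_le_sum
          intro i hi
          have hi' : i < m := Finset.mem_range.mp hi
          have : c^(m-1) = c^i * c^(m-1-i) := by
            rw [← pow_add]
            congr 1
            omega
          rw [this]
          apply mul_le_mul
          · exact pow_le_pow_left₀ hc (le_trans hca hab) i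
          · exact pow_le_pow_left₀ hc hca _
          · exact pow_nonneg hc _
          · exact pow_nonneg (le_trans hc (le_trans hca hab)) i
  nlinarith [this]

end prelim

section cantor
variable {α : ℝ} (h0 : 0 < α) (h1 : α < 1)
include h0 h1

lemma summable_digits {ε : ℕ → ℝ} (hε : ∀ n, ε n = 0 ∨ ε n = 1) :
    Summable (fun n => ε n * pa α * qa α ^ n) := by
  have hq0 : 0 ≤ qa α := le_of_lt (by unfold qa; linarith)
  have hq1 : qa α < 1 := by unfold qa; linarith
  have hp0 : 0 < pa α := by unfold pa; linarith
  refine Summable.of_nonneg_of_le (fun n => ?_) (fun n => ?_)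
    ((summable_geometric_of_lt_one hq0 hq1).mul_left (pa α))
  · rcases hε n with h | h
    · rw [h]; simp
    · rw [h, one_mul]; exact mul_nonneg hp0.le (pow_nonneg hq0 n)
  · rcases hε n with h | h
    · rw [h, zero_mul, zero_mul]; exact mul_nonneg hp0.le (pow_nonneg hq0 n)
    · rw [h, one_mul]

omit h0 h1 in
/-- the tsum of a digit sequence is in the Cantor set -/
lemma tsum_mem_cantor {ε : ℕ → ℝ} (hε : ∀ n, ε n = 0 ∨ ε n = 1) :
    (∑' n : ℕ, ε n * pa α * qa α ^ n) ∈ centralCantor α := ⟨ε, hε, rfl⟩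

/-- partial sum + tail decomposition, and tail bounds -/
lemma tail_bounds {ε : ℕ → ℝ} (hε : ∀ n, ε n = 0 ∨ ε n = 1) (D : ℕ) :
    ∑ j ∈ Finset.range D, ε j * pa α * qa α ^ j ≤ (∑' n : ℕ, ε n * pa α * qa α ^ n) ∧
    (∑' n : ℕ, ε n * pa α * qa α ^ n) ≤ (∑ j ∈ Finset.range D, ε j * pa α * qa α ^ j) + qa α ^ D := by
  have hq0 : 0 ≤ qa α := le_of_lt (by unfold qa; linarith)
  have hq1 : qa α < 1 := by unfold qa; linarith
  have hp0 : 0 < pa α := by unfold pa; linarith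
  have hs := summable_digits h0 h1 hε
  have hsplit := Summable.sum_add_tsum_nat_add D hs
  have htail0 : 0 ≤ ∑' n : ℕ, ε (n + D) * pa α * qa α ^ (n + D) := by
    apply tsum_nonneg
    intro n
    rcases hε (n + D) with h | h
    · rw [h]; simp
    · rw [h, one_mul]; exact mul_nonneg hp0.le (pow_nonneg hq0 _)
  have htail1 : (∑' n : ℕ, ε (n + D) * pa α * qa α ^ (n + D)) ≤ qa α ^ D := by
    have hle : ∀ n : ℕ, ε (n + D) * pa α * qa α ^ (n + D) ≤ pa α * qa α ^ n * qa α ^ D := by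
      intro n
      have he : pa α * qa α ^ n * qa α ^ D = pa α * qa α ^ (n + D) := by ring
      rw [he]
      rcases hε (n + D) with h | h
      · rw [h, zero_mul, zero_mul]; exact mul_nonneg hp0.le (pow_nonneg hq0 _)
      · rw [h, one_mul]
    calc (∑' n : ℕ, ε (n + D) * pa α * qa α ^ (n + D))
        ≤ ∑' n : ℕ, pa α * qa α ^ n * qa α ^ D := by
          apply Summable.tsum_le_tsum hle (hs.comp_injective (add_left_injective D))
          exact (((summable_geometric_of_lt_one hq0 hq1).mul_left (pa α)).mul_right _)
      _ = (∑' n : ℕ, qa α ^ n) * pa α * qa α ^ D := by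
          rw [tsum_mul_right, tsum_mul_left]; ring
      _ = qa α ^ D := by
          rw [tsum_geometric_of_lt_one hq0 hq1]
          have hpq : 1 - qa α = pa α := by unfold pa qa; ring
          rw [hpq]; field_simp
  constructor
  · linarith
  · linarith

end cantor

def InvW (α : ℝ) (m n : ℕ) (y : ℝ) (D : ℕ) (A : Fin n → ℝ) : Prop :=
  (∀ i, pa α ≤ A i ∧ A i + qa α ^ D ≤ 1) ∧
  (∑ i, (A i)^m) ≤ y ∧ y ≤ ∑ i, (A i + qa α ^ D)^m

lemma sweep {α : ℝ} (h0 : 0 < α) (h1 : α < 1) (m n : ℕ)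
    (hn : α ≤ ((n:ℝ) - 1) * pa α ^ (m-1) * qa α) (y : ℝ) (D : ℕ)
    (A : Fin n → ℝ) (hA : InvW α m n y D A) :
    ∃ A', (∀ i, A' i = A i ∨ A' i = A i + pa α * qa α ^ D) ∧ InvW α m n y (D+1) A' := by
  have hq0 : 0 < qa α := by unfold qa; linarith
  have hq1 : qa α < 1 := by unfold qa; linarith
  have hp0 : 0 < pa α := by unfold pa; linarith
  have hp1 : pa α < 1 := by unfold pa; linarith
  have hqp : qa α ≤ pa α := by unfold pa qa; linarith
  have hpq1 : pa α + qa α = 1 := by unfold pa qa; ring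
  have hpqα : pa α - qa α = α := by unfold pa qa; ring
  have key : ∀ j : ℕ, j ≤ n → ∃ A' : Fin n → ℝ,
      (∀ i : Fin n, if (i:ℕ) < j then (A' i = A i ∨ A' i = A i + pa α * qa α ^ D)
        else A' i = A i) ∧
      (∀ i : Fin n, pa α ≤ A' i ∧ A' i + qa α ^ (if (i:ℕ) < j then D+1 else D) ≤ 1) ∧
      (∑ i, (A' i)^m) ≤ y ∧
      y ≤ ∑ i, (A' i + qa α ^ (if (i:ℕ) < j then D+1 else D))^m := by
    intro j
    induction j with
    | zero =>
      intro _
      refine ⟨A, fun i => by simp, fun i => by simpa using hA.1 i, by simpa using hA.2.1,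
        by simpa using hA.2.2⟩
    | succ j ih =>
      intro hj
      obtain ⟨B, hB1, hB2, hB3, hB4⟩ := ih (Nat.le_of_succ_le hj)
      have hjn : j < n := hj
      set i0 : Fin n := ⟨j, hjn⟩ with hi0
      have hii0 : (i0 : ℕ) = j := rfl
      -- basic facts about the piece at i0
      have hbnd := hB2 i0
      rw [hii0, if_neg (lt_irrefl j)] at hbnd
      obtain ⟨hba, hb1⟩ := hbnd
      have hBA0 : B i0 = A i0 := by
        have := hB1 i0
        rwa [hii0, if_neg (lt_irrefl j)] at this
      -- exponents agree off i0
      have hexp : ∀ i ∈ Finset.univ.erase i0,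
          (if (i:ℕ) < j+1 then D+1 else D) = (if (i:ℕ) < j then D+1 else D) := by
        intro i hi
        have hne : (i:ℕ) ≠ j := fun h => (Finset.mem_erase.mp hi).1 (Fin.ext h)
        by_cases h : (i:ℕ) < j
        · rw [if_pos h, if_pos (by omega)]
        · rw [if_neg h, if_neg (by omega)]
      -- sums split
      have hsplit1 : (∑ i, (B i)^m)
          = (B i0)^m + ∑ i ∈ Finset.univ.erase i0, (B i)^m :=
        (Finset.add_sum_erase _ _ (Finset.mem_univ i0)).symm
      have hsplit2 : (∑ i, (B i + qa α ^ (if (i:ℕ) < j then D+1 else D))^m)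
          = (B i0 + qa α ^ D)^m
            + ∑ i ∈ Finset.univ.erase i0, (B i + qa α ^ (if (i:ℕ) < j then D+1 else D))^m := by
        rw [← Finset.add_sum_erase _ _ (Finset.mem_univ i0), hii0, if_neg (lt_irrefl j)]
      set Slo := ∑ i ∈ Finset.univ.erase i0, (B i)^m with hSlo
      set Shi := ∑ i ∈ Finset.univ.erase i0, (B i + qa α ^ (if (i:ℕ) < j then D+1 else D))^m
        with hShi
      -- width of the window over the other coordinates
      have hcard : (Finset.univ.erase i0).card = n - 1 := by
        rw [Finset.card_erase_of_mem (Finset.mem_univ i0), Finset.card_univ, Fintype.card_fin]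
      have hterm : ∀ i ∈ Finset.univ.erase i0,
          (m:ℝ) * qa α ^ (D+1) * pa α ^ (m-1)
            ≤ (B i + qa α ^ (if (i:ℕ) < j then D+1 else D))^m - (B i)^m := by
        intro i _
        have hbi := hB2 i
        have hqe : qa α ^ (D+1) ≤ qa α ^ (if (i:ℕ) < j then D+1 else D) := by
          apply pow_le_pow_of_le_one hq0.le hq1.le
          split <;> omega
        have hpow : (0:ℝ) ≤ pa α ^ (m-1) := by positivity
        calc (m:ℝ) * qa α ^ (D+1) * pa α ^ (m-1)
            ≤ (m:ℝ) * ((B i + qa α ^ (if (i:ℕ) < j then D+1 else D)) - B i) * pa α ^ (m-1) := by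
              have hm0 : (0:ℝ) ≤ (m:ℝ) := Nat.cast_nonneg m
              have : (B i + qa α ^ (if (i:ℕ) < j then D+1 else D)) - B i
                  = qa α ^ (if (i:ℕ) < j then D+1 else D) := by ring
              rw [this]
              have := mul_le_mul_of_nonneg_right (mul_le_mul_of_nonneg_left hqe hm0) hpow
              linarith
          _ ≤ _ := pow_sub_pow_ge m hp0.le hbi.1 (le_add_of_nonneg_right (pow_nonneg hq0.le _))
      have hsum : ((n:ℝ)-1) * ((m:ℝ) * qa α ^ (D+1) * pa α ^ (m-1)) ≤ Shi - Slo := by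
        have h := Finset.sum_le_sum hterm
        rw [Finset.sum_const, hcard, Finset.sum_sub_distrib] at h
        have hc : ((n-1 : ℕ):ℝ) = (n:ℝ) - 1 := by
          have : 1 ≤ n := by omega
          push_cast [this]; ring
        rw [nsmul_eq_mul, hc] at h
        exact h
      -- the gap inequality
      have hgap : (B i0 + pa α * qa α ^ D)^m - (B i0 + qa α ^ (D+1))^m ≤ Shi - Slo := by
        have hqD : (0:ℝ) ≤ qa α ^ D := pow_nonneg hq0.le D
        have e0 : B i0 + qa α ^ (D+1) ≤ B i0 + pa α * qa α ^ D := by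
          have := mul_le_mul_of_nonneg_right hqp hqD
          rw [pow_succ]
          linarith [this]
        have e0' : B i0 + pa α * qa α ^ D ≤ 1 := by
          have := mul_le_mul_of_nonneg_right hp1.le hqD
          linarith [this, hb1]
        have e1 := pow_sub_pow_le m (a := B i0 + qa α ^ (D+1)) (b := B i0 + pa α * qa α ^ D)
          (by have := pow_nonneg hq0.le (D+1); linarith [hba, hp0]) e0 e0'
        have e2 : (B i0 + pa α * qa α ^ D) - (B i0 + qa α ^ (D+1)) = α * qa α ^ D := by
          linear_combination qa α ^ D * hpqα
        rw [e2] at e1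
        have e3 : (m:ℝ) * (α * qa α ^ D) ≤ ((n:ℝ)-1) * ((m:ℝ) * qa α ^ (D+1) * pa α ^ (m-1)) := by
          have hm0 : (0:ℝ) ≤ (m:ℝ) := Nat.cast_nonneg m
          have hqD : (0:ℝ) ≤ qa α ^ D := pow_nonneg hq0.le D
          have : (m:ℝ) * qa α ^ D * α ≤ (m:ℝ) * qa α ^ D * (((n:ℝ) - 1) * pa α ^ (m-1) * qa α) := by
            apply mul_le_mul_of_nonneg_left hn (by
              exact mul_nonneg hm0 hqD)
          calc (m:ℝ) * (α * qa α ^ D) = (m:ℝ) * qa α ^ D * α := by ring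
            _ ≤ (m:ℝ) * qa α ^ D * (((n:ℝ) - 1) * pa α ^ (m-1) * qa α) := this
            _ = ((n:ℝ)-1) * ((m:ℝ) * qa α ^ (D+1) * pa α ^ (m-1)) := by rw [pow_succ]; ring
        linarith
      by_cases hcase : y ≤ Shi + (B i0 + qa α ^ (D+1))^m
      · -- keep the left child at i0
        refine ⟨B, ?_, ?_, hB3, ?_⟩
        · intro i
          have h := hB1 i
          by_cases hlt : (i:ℕ) < j
          · rw [if_pos hlt] at h; rw [if_pos (by omega)]; exact h
          · rw [if_neg hlt] at h
            by_cases hlt' : (i:ℕ) < j + 1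
            · rw [if_pos hlt']; exact Or.inl h
            · rw [if_neg hlt']; exact h
        · intro i
          have h := hB2 i
          have hqe : qa α ^ (if (i:ℕ) < j+1 then D+1 else D)
              ≤ qa α ^ (if (i:ℕ) < j then D+1 else D) := by
            apply pow_le_pow_of_le_one hq0.le hq1.le
            split <;> split <;> omega
          exact ⟨h.1, by linarith [h.2]⟩
        · have : (∑ i, (B i + qa α ^ (if (i:ℕ) < j+1 then D+1 else D))^m)
              = (B i0 + qa α ^ (D+1))^m + Shi := by
            rw [← Finset.add_sum_erase _ _ (Finset.mem_univ i0), hii0, if_pos (Nat.lt_succ_self j)]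
            congr 1
            exact Finset.sum_congr rfl (fun i hi => by rw [hexp i hi])
          rw [this]; linarith
      · -- take the right child at i0
        push_neg at hcase
        refine ⟨Function.update B i0 (B i0 + pa α * qa α ^ D), ?_, ?_, ?_, ?_⟩
        · intro i
          by_cases hi : i = i0
          · subst hi
            rw [Function.update_self, hii0, if_pos (Nat.lt_succ_self j), hBA0]
            exact Or.inr rfl
          · rw [Function.update_of_ne hi]
            have h := hB1 i
            have hne : (i:ℕ) ≠ j := fun hh => hi (Fin.ext hh)
            by_cases hlt : (i:ℕ) < j
            · rw [if_pos hlt] at h; rw [if_pos (by omega)]; exact h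
            · rw [if_neg hlt] at h; rw [if_neg (by omega)]; exact h
        · intro i
          by_cases hi : i = i0
          · subst hi
            rw [Function.update_self, hii0, if_pos (Nat.lt_succ_self j)]
            constructor
            · have := mul_nonneg hp0.le (pow_nonneg hq0.le D)
              linarith
            · have : pa α * qa α ^ D + qa α ^ (D+1) = qa α ^ D := by
                linear_combination qa α ^ D * hpq1
              linarith
          · rw [Function.update_of_ne hi]
            have h := hB2 i
            have hne : (i:ℕ) ≠ j := fun hh => hi (Fin.ext hh)
            have hqe : qa α ^ (if (i:ℕ) < j+1 then D+1 else D)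
                ≤ qa α ^ (if (i:ℕ) < j then D+1 else D) := by
              apply pow_le_pow_of_le_one hq0.le hq1.le
              split <;> split <;> omega
            exact ⟨h.1, by linarith [h.2]⟩
        · have : (∑ i, (Function.update B i0 (B i0 + pa α * qa α ^ D) i)^m)
              = (B i0 + pa α * qa α ^ D)^m + Slo := by
            rw [← Finset.add_sum_erase _ _ (Finset.mem_univ i0), Function.update_self]
            congr 1
            exact Finset.sum_congr rfl
              (fun i hi => by rw [Function.update_of_ne (Finset.mem_erase.mp hi).1])
          rw [this]
          linarith
        · have : (∑ i, (Function.update B i0 (B i0 + pa α * qa α ^ D) i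
              + qa α ^ (if (i:ℕ) < j+1 then D+1 else D))^m)
              = (B i0 + qa α ^ D)^m + Shi := by
            rw [← Finset.add_sum_erase _ _ (Finset.mem_univ i0), Function.update_self,
              hii0, if_pos (Nat.lt_succ_self j)]
            congr 1
            · have : pa α * qa α ^ D + qa α ^ (D+1) = qa α ^ D := by
                linear_combination qa α ^ D * hpq1
              rw [add_assoc, this]
            · exact Finset.sum_congr rfl (fun i hi => by
                rw [Function.update_of_ne (Finset.mem_erase.mp hi).1, hexp i hi])
          rw [this]
          linarith [hB4, hsplit2]
  obtain ⟨A', h1', h2', h3', h4'⟩ := key n (le_refl n)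
  refine ⟨A', fun i => ?_, fun i => ?_, h3', ?_⟩
  · have := h1' i; rwa [if_pos i.isLt] at this
  · have := h2' i; rwa [if_pos i.isLt] at this
  · have : (∑ i, (A' i + qa α ^ (if (i:ℕ) < n then D+1 else D))^m)
        = ∑ i, (A' i + qa α ^ (D+1))^m :=
      Finset.sum_congr rfl (fun i _ => by rw [if_pos i.isLt])
    rw [← this]
    exact h4'

/-- The main covering lemma: `[n(1-q²)^m , n] ⊆` sums of `n` powers of Cantor elements. -/
lemma main_cover {α : ℝ} (h0 : 0 < α) (h1 : α < 1) (m n : ℕ)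
    (hn : α ≤ ((n:ℝ) - 1) * pa α ^ (m-1) * qa α) (y : ℝ)
    (hy1 : (n:ℝ) * (1 - qa α ^ 2)^m ≤ y) (hy2 : y ≤ (n:ℝ)) :
    ∃ c : Fin n → ℝ, (∀ i, c i ∈ centralCantor α) ∧ ∑ i, (c i)^m = y := by
  have hq0 : 0 < qa α := by unfold qa; linarith
  have hq1 : qa α < 1 := by unfold qa; linarith
  have hp0 : 0 < pa α := by unfold pa; linarith
  have hp1 : pa α < 1 := by unfold pa; linarith
  have hpq1 : pa α + qa α = 1 := by unfold pa qa; ring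
  -- base state
  have base : InvW α m n y 2 (fun _ => 1 - qa α ^ 2) := by
    refine ⟨fun i => ⟨?_, by norm_num⟩, ?_, ?_⟩
    · show pa α ≤ 1 - qa α ^ 2
      nlinarith [mul_pos hq0 (show (0:ℝ) < 1 - qa α by linarith)]
    · calc (∑ _i : Fin n, (1 - qa α ^ 2)^m) = (n:ℝ) * (1 - qa α ^ 2)^m := by
            rw [Finset.sum_const, Finset.card_univ, Fintype.card_fin, nsmul_eq_mul]
        _ ≤ y := hy1
    · calc y ≤ (n:ℝ) := hy2
        _ = ∑ _i : Fin n, ((1 - qa α ^ 2) + qa α ^ 2)^m := by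
            simp
  -- the iterated refinement
  classical
  set step : ℕ → (Fin n → ℝ) → (Fin n → ℝ) := fun D A =>
    if h : InvW α m n y (D+2) A then (sweep h0 h1 m n hn y (D+2) A h).choose else A
    with hstepdef
  set AA : ℕ → Fin n → ℝ :=
    fun D => Nat.rec (motive := fun _ => Fin n → ℝ) (fun _ => 1 - qa α ^ 2) step D with hAAdef
  have hAA0 : AA 0 = fun _ => 1 - qa α ^ 2 := rfl
  have hAAsucc : ∀ D, AA (D+1) = step D (AA D) := fun D => rfl
  have hInv : ∀ D, InvW α m n y (D+2) (AA D) := by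
    intro D
    induction D with
    | zero => exact base
    | succ D ih =>
      rw [hAAsucc D, hstepdef]
      simp only [dif_pos ih]
      exact (sweep h0 h1 m n hn y (D+2) (AA D) ih).choose_spec.2
  have hstep : ∀ D i, AA (D+1) i = AA D i ∨ AA (D+1) i = AA D i + pa α * qa α ^ (D+2) := by
    intro D i
    have h := hInv D
    rw [hAAsucc D, hstepdef]
    simp only [dif_pos h]
    exact (sweep h0 h1 m n hn y (D+2) (AA D) h).choose_spec.1 i
  -- digits
  set ε : Fin n → ℕ → ℝ := fun i j =>
    match j with
    | 0 => 1
    | 1 => 1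
    | (D+2) => if AA (D+1) i = AA D i then 0 else 1
    with hεdef
  have hε0 : ∀ i, ε i 0 = 1 := fun _ => rfl
  have hε1 : ∀ i, ε i 1 = 1 := fun _ => rfl
  have hε2 : ∀ i D, ε i (D+2)
      = if AA (D+1) i = AA D i then 0 else 1 := fun _ _ => rfl
  have hdig : ∀ i j, ε i j = 0 ∨ ε i j = 1 := by
    intro i j
    match j with
    | 0 => exact Or.inr (hε0 i)
    | 1 => exact Or.inr (hε1 i)
    | (D+2) =>
      rw [hε2 i D]
      split
      · exact Or.inl rfl
      · exact Or.inr rfl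
  -- partial sums are the left endpoints
  have hps : ∀ i D, ∑ j ∈ Finset.range (D+2), ε i j * pa α * qa α ^ j = AA D i := by
    intro i D
    induction D with
    | zero =>
      rw [Finset.sum_range_succ, Finset.sum_range_one]
      show (1:ℝ) * pa α * qa α ^ 0 + (1:ℝ) * pa α * qa α ^ 1 = 1 - qa α ^ 2
      unfold pa qa; ring
    | succ D ih =>
      rw [Finset.sum_range_succ, ih]
      by_cases h : AA (D+1) i = AA D i
      · have hεv : ε i (D+2) = 0 := by rw [hε2 i D, if_pos h]
        rw [hεv, h]; ring
      · have hεv : ε i (D+2) = 1 := by rw [hε2 i D, if_neg h]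
        rcases hstep D i with h' | h'
        · exact absurd h' h
        · rw [hεv, h']; ring
  -- the Cantor points
  set c : Fin n → ℝ := fun i => ∑' j, ε i j * pa α * qa α ^ j with hcdef
  have hcmem : ∀ i, c i ∈ centralCantor α := fun i => tsum_mem_cantor (hdig i)
  have hcbnd : ∀ i D, AA D i ≤ c i ∧ c i ≤ AA D i + qa α ^ (D+2) := by
    intro i D
    have ht := tail_bounds h0 h1 (hdig i) (D+2)
    rw [hps i D] at ht
    exact ht
  -- the power sum equals y
  refine ⟨c, hcmem, ?_⟩
  set S := ∑ i, (c i)^m with hSdef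
  have hclose : ∀ D : ℕ, |S - y| ≤ (n:ℝ) * m * qa α ^ (D+2) := by
    intro D
    obtain ⟨hb, hw1, hw2⟩ := hInv D
    have hSlo : (∑ i, (AA D i)^m) ≤ S := by
      apply Finset.sum_le_sum
      intro i _
      exact pow_le_pow_left₀ (le_trans hp0.le (hb i).1) (hcbnd i D).1 m
    have hShi : S ≤ ∑ i, (AA D i + qa α ^ (D+2))^m := by
      apply Finset.sum_le_sum
      intro i _
      have h1' : 0 ≤ c i := le_trans (le_trans hp0.le (hb i).1) (hcbnd i D).1
      exact pow_le_pow_left₀ h1' (hcbnd i D).2 m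
    have hwidth : (∑ i, (AA D i + qa α ^ (D+2))^m) - (∑ i, (AA D i)^m)
        ≤ (n:ℝ) * m * qa α ^ (D+2) := by
      rw [← Finset.sum_sub_distrib]
      calc (∑ i, ((AA D i + qa α ^ (D+2))^m - (AA D i)^m))
          ≤ ∑ _i : Fin n, (m:ℝ) * qa α ^ (D+2) := by
            apply Finset.sum_le_sum
            intro i _
            have hrange := hb i
            have hle1 : AA D i + qa α ^ (D+2) ≤ 1 := hrange.2
            have := pow_sub_pow_le m (a := AA D i) (b := AA D i + qa α ^ (D+2))
              (le_trans hp0.le hrange.1) (le_add_of_nonneg_right (pow_nonneg hq0.le _)) hle1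
            calc (AA D i + qa α ^ (D+2))^m - (AA D i)^m
                ≤ m * ((AA D i + qa α ^ (D+2)) - AA D i) := this
              _ = (m:ℝ) * qa α ^ (D+2) := by ring
        _ = (n:ℝ) * m * qa α ^ (D+2) := by
            rw [Finset.sum_const, Finset.card_univ, Fintype.card_fin, nsmul_eq_mul]; ring
    rw [abs_sub_le_iff]
    constructor <;> linarith
  -- conclude S = y
  by_contra hne
  have habs : 0 < |S - y| := abs_pos.mpr (sub_ne_zero.mpr hne)
  have hnm : (0:ℝ) ≤ (n:ℝ) * m := by positivity
  obtain ⟨D, hD⟩ := exists_pow_lt_of_lt_one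
    (show (0:ℝ) < |S - y| / ((n:ℝ)*m + 1) by positivity) hq1
  have h2 : qa α ^ (D+2) ≤ qa α ^ D := pow_le_pow_of_le_one hq0.le hq1.le (by omega)
  have h3 := hclose D
  have h4 : (n:ℝ) * m * qa α ^ (D+2) ≤ (n:ℝ) * m * qa α ^ D :=
    mul_le_mul_of_nonneg_left h2 hnm
  have h5 : (n:ℝ) * m * qa α ^ D < ((n:ℝ)*m + 1) * (|S - y| / ((n:ℝ)*m + 1)) := by
    have := mul_le_mul_of_nonneg_right (le_refl ((n:ℝ)*m)) (pow_nonneg hq0.le D)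
    nlinarith [pow_nonneg hq0.le D, hD]
  have h6 : ((n:ℝ)*m + 1) * (|S - y| / ((n:ℝ)*m + 1)) = |S - y| := by
    field_simp
  linarith

lemma pa_mem {α : ℝ} : pa α ∈ centralCantor α := by
  classical
  refine ⟨fun j => if j = 0 then 1 else 0, fun j => ?_, ?_⟩
  · by_cases h : j = 0
    · exact Or.inr (by simp [h])
    · exact Or.inl (by simp [h])
  · rw [tsum_eq_single 0 ?_]
    · norm_num [pa]
    · intro b hb
      simp [hb]

set_option maxHeartbeats 1000000 in
/-- The interval `I^{(t)}` is contained in `Γ_{α,m}`, for `1 ≤ t ≤ r_{α,m}/2`. -/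
theorem interval_t_subset_Gamma (α : ℝ) (hα : α ∈ Set.Ioo (0 : ℝ) 1) (m : ℕ) (hm : 0 < m)
    (t : ℕ) (ht1 : 1 ≤ t) (ht2 : 2 * t ≤ rCount α m) :
    Set.Icc
      (((rCount α m : ℝ) / 2 - t) * ((1 + α) / 2) ^ m
        + ((t : ℝ) + 1) * (((1 + α) / 2) ^ m * ((3 - α) / 2) ^ m)
        + ((rCount α m : ℝ) / 2 - 1))
      (((rCount α m : ℝ) / 2 - t) * ((1 + α) / 2) ^ m
        + ((t : ℝ) - 1) * (((1 + α) / 2) ^ m * ((3 - α) / 2) ^ m)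
        + ((rCount α m : ℝ) / 2 + 1))
      ⊆ Gam α m := by
  obtain ⟨h0, h1⟩ := hα
  have hq0 : 0 < qa α := by unfold qa; linarith
  have hq1 : qa α < 1 := by unfold qa; linarith
  have hp0 : 0 < pa α := by unfold pa; linarith
  have hp1 : pa α < 1 := by unfold pa; linarith
  set s := sCount α m with hs
  set k := kCount α m with hk
  set N := s + k with hN
  -- basic counting facts
  have hs1 : 1 ≤ s := by
    rw [hs, sCount]
    exact Nat.ceil_pos.mpr (pow_pos (div_pos two_pos (by linarith)) _)
  have hrN : rCount α m = 2 * N := by rw [rCount, hN, ← hs, ← hk]; ring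
  have htN : t ≤ N := by omega
  have hN1 : 1 ≤ N := by omega
  -- spa : s · pa^(m-1) ≥ 1
  have hspa : (1:ℝ) ≤ (s:ℝ) * pa α ^ (m-1) := by
    have hle : (2 / (1 + α)) ^ (m - 1) ≤ (s:ℝ) := by
      rw [hs, sCount]; exact Nat.le_ceil _
    have h2pa : ((2:ℝ) / (1 + α)) = (pa α)⁻¹ := by rw [pa]; field_simp
    rw [h2pa] at hle
    have hpp : 0 < pa α ^ (m-1) := pow_pos hp0 _
    have hmul := mul_le_mul_of_nonneg_right hle hpp.le
    have hone : (pa α)⁻¹ ^ (m-1) * pa α ^ (m-1) = 1 := by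
      rw [inv_pow]
      exact inv_mul_cancel₀ (pow_ne_zero _ hp0.ne')
    linarith [hmul, hone.symm.le, hone.le]
  -- the key numeric condition
  have hkey : α ≤ ((N:ℝ) + t - 1) * pa α ^ (m-1) * qa α := by
    have hge : (s:ℝ) * pa α ^ (m-1) * qa α ≥ qa α := by
      nlinarith [hspa, hq0]
    have hNt : ((N:ℝ) + t - 1) ≥ (s:ℝ) + (k:ℝ) := by
      have : (1:ℝ) ≤ (t:ℝ) := by exact_mod_cast ht1
      have : ((N:ℕ):ℝ) = (s:ℝ) + k := by rw [hN]; push_cast; ring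
      linarith
    have hmono : ((N:ℝ) + t - 1) * pa α ^ (m-1) * qa α
        ≥ ((s:ℝ) + k) * pa α ^ (m-1) * qa α := by
      have hpp : 0 < pa α ^ (m-1) * qa α := by positivity
      nlinarith [hNt, hpp]
    by_cases hα3 : 1/3 < α
    · -- k ≥ (3α-1)/2 / (pa^(m-1) pa qa)
      have hkk : ((3 * α - 1) / 2) / (pa α ^ (m-1) * (pa α * qa α)) ≤ (k:ℝ) := by
        have hle : ((3 * α - 1) / 2) / (((1 + α) / 2) ^ (m - 1) * ((1 - α ^ 2) / 4)) ≤ (k:ℝ) := by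
          rw [hk, kCount, if_pos hα3]; exact Nat.le_ceil _
        have e : (((1 + α) / 2 : ℝ)) ^ (m - 1) * ((1 - α ^ 2) / 4)
            = pa α ^ (m-1) * (pa α * qa α) := by rw [pa, qa]; ring
        rwa [e] at hle
      have hden : (0:ℝ) < pa α ^ (m-1) * (pa α * qa α) := by positivity
      have hk2 : (3 * α - 1) / 2 ≤ (k:ℝ) * (pa α ^ (m-1) * (pa α * qa α)) := by
        rw [div_le_iff₀ hden] at hkk
        linarith
      have hk3 : (k:ℝ) * (pa α ^ (m-1) * (pa α * qa α)) ≤ (k:ℝ) * pa α ^ (m-1) * qa α := by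
        have : (k:ℝ) * (pa α ^ (m-1) * (pa α * qa α)) = ((k:ℝ) * pa α ^ (m-1) * qa α) * pa α := by
          ring
        rw [this]
        nlinarith [mul_nonneg (mul_nonneg (Nat.cast_nonneg k) (pow_nonneg hp0.le (m-1))) hq0.le]
      have hαq : α - qa α = (3 * α - 1) / 2 := by rw [qa]; ring
      have : ((s:ℝ) + k) * pa α ^ (m-1) * qa α
          = (s:ℝ) * pa α ^ (m-1) * qa α + (k:ℝ) * pa α ^ (m-1) * qa α := by ring
      rw [ge_iff_le] at hmono
      linarith [hge, hk2, hk3]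
    · -- α ≤ 1/3 : k = 0 and qa ≥ α
      have hα3' : α ≤ (1:ℝ)/3 := by linarith [not_lt.mp hα3]
      have hqα : α ≤ qa α := by rw [qa]; linarith
      have : ((s:ℝ) + k) * pa α ^ (m-1) * qa α ≥ (s:ℝ) * pa α ^ (m-1) * qa α := by
        have hpp : (0:ℝ) ≤ pa α ^ (m-1) * qa α := by positivity
        have : (0:ℝ) ≤ (k:ℝ) := Nat.cast_nonneg k
        nlinarith
      linarith [hge, hmono]
  -- now the inclusion
  intro y hy
  obtain ⟨hylo, hyhi⟩ := hy
  have hNr : ((rCount α m : ℕ):ℝ) / 2 = (N:ℝ) := by rw [hrN]; push_cast; ring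
  rw [hNr] at hylo hyhi
  have hXpa : ((1 + α) / 2 : ℝ) ^ m * ((3 - α) / 2) ^ m = (1 - qa α ^ 2)^m := by
    rw [← mul_pow, qa]; ring_nf
  have hpam : ((1 + α) / 2 : ℝ) ^ m = pa α ^ m := by rw [pa]
  rw [hXpa, hpam] at hylo hyhi
  set X := (1 - qa α ^ 2)^m with hX
  have hX0 : 0 ≤ X := by
    rw [hX]; apply pow_nonneg; nlinarith [hq0, hq1]
  have hX1 : X ≤ 1 := by
    rw [hX]; apply pow_le_one₀ (by nlinarith [hq0, hq1]) (by nlinarith [hq0])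
  -- the shifted target
  set y' := y - ((N:ℝ) - t) * pa α ^ m with hy'
  have hy1' : ((N + t : ℕ):ℝ) * X ≤ y' := by
    push_cast
    have : ((N:ℝ) - 1) * X ≤ (N:ℝ) - 1 := by
      nlinarith [hX1, hX0, (show (1:ℝ) ≤ (N:ℝ) by exact_mod_cast hN1)]
    rw [hy']
    nlinarith [hylo]
  have hy2' : y' ≤ ((N + t : ℕ):ℝ) := by
    push_cast
    have ht1' : (1:ℝ) ≤ (t:ℝ) := by exact_mod_cast ht1
    have : ((t:ℝ) - 1) * X ≤ (t:ℝ) - 1 := by nlinarith [hX1, hX0]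
    rw [hy']
    nlinarith [hyhi]
  -- apply the covering lemma with n = N + t
  have hn' : α ≤ (((N + t : ℕ):ℝ) - 1) * pa α ^ (m-1) * qa α := by
    push_cast
    exact hkey
  have hcover := main_cover h0 h1 m (N + t) hn' y' (by rw [hX] at hy1'; exact_mod_cast hy1') hy2'
  obtain ⟨cc, hccmem, hccsum⟩ := hcover
  -- assemble the full tuple
  have hcast : rCount α m = (N - t) + (N + t) := by omega
  refine ⟨fun i => Fin.append (fun _ : Fin (N - t) => pa α) cc (finCongr hcast i), ?_, ?_⟩
  · intro i
    refine Fin.addCases (motive := fun j => Fin.append (fun _ : Fin (N - t) => pa α) cc j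
      ∈ centralCantor α) ?_ ?_ (finCongr hcast i)
    · intro j; rw [Fin.append_left]; exact pa_mem
    · intro j; rw [Fin.append_right]; exact hccmem j
  · rw [Equiv.sum_comp (finCongr hcast)
      (fun j => (Fin.append (fun _ : Fin (N - t) => pa α) cc j) ^ m), Fin.sum_univ_add]
    simp only [Fin.append_left, Fin.append_right]
    rw [Finset.sum_const, Finset.card_univ, Fintype.card_fin, nsmul_eq_mul, hccsum]
    have hNt' : ((N - t : ℕ):ℝ) = (N:ℝ) - t := by
      push_cast [htN]; ring
    rw [hNt', hy']
    ring
end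

section
/- For every α ∈ (0,1), every positive integer m, and every integer t with 1 ≤ t ≤ r_{α,m}/2, the closed interval I_{(t)} = [ (r_{α,m}/2 + 1)·((1+α)/2)^m + (t−1)·((3+α²)/4)^m + (r_{α,m}/2 − t) , (r_{α,m}/2 − 1)·((1+α)/2)^m + (t+1)·((3+α²)/4)^m + (r_{α,m}/2 − t) ] is contained in Γ_{α,m}. -/
open scoped BigOperators

namespace CantorGamma



/-- upper bound on power increments -/
lemma pow_diff_le (n : ℕ) {x δ B : ℝ} (hx : 0 ≤ x) (hδ : 0 ≤ δ) (hB : x + δ ≤ B) :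
    (x + δ) ^ (n+1) - x ^ (n+1) ≤ (n+1) * B ^ n * δ := by
  induction n with
  | zero => norm_num
  | succ p ih =>
    have hB0 : 0 ≤ B := le_trans (by linarith) hB
    have hxB : x ≤ B := by linarith
    have h3 : 0 ≤ (x+δ)^(p+1) - x^(p+1) := by
      have := pow_le_pow_left₀ (by linarith : (0:ℝ) ≤ x) (by linarith : x ≤ x + δ) (p+1)
      linarith
    have h4 : (x+δ) * ((x+δ)^(p+1) - x^(p+1)) ≤ B * ((p+1) * B^p * δ) := by
      have h1 : (x+δ) * ((x+δ)^(p+1) - x^(p+1)) ≤ B * ((x+δ)^(p+1) - x^(p+1)) :=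
        mul_le_mul_of_nonneg_right (by linarith) h3
      have h2 : B * ((x+δ)^(p+1) - x^(p+1)) ≤ B * ((p+1) * B^p * δ) :=
        mul_le_mul_of_nonneg_left ih hB0
      linarith
    have h5 : δ * x^(p+1) ≤ δ * B^(p+1) :=
      mul_le_mul_of_nonneg_left (pow_le_pow_left₀ hx hxB (p+1)) hδ
    have hexp : (x+δ)^(p+2) - x^(p+2) = (x+δ) * ((x+δ)^(p+1) - x^(p+1)) + δ * x^(p+1) := by ring
    have : B * ((p+1) * B^p * δ) + δ * B^(p+1) = ((p:ℝ)+2) * B^(p+1) * δ := by ring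
    push_cast
    push_cast at h4 this
    nlinarith [h4, h5]

/-- lower bound on power increments -/
lemma le_pow_diff (n : ℕ) {x δ A : ℝ} (hA : 0 ≤ A) (hAx : A ≤ x) (hδ : 0 ≤ δ) :
    ((n:ℝ)+1) * A ^ n * δ ≤ (x + δ) ^ (n+1) - x ^ (n+1) := by
  induction n with
  | zero => norm_num
  | succ p ih =>
    have hx0 : 0 ≤ x := le_trans hA hAx
    have h3 : ((p:ℝ)+1) * A^p * δ ≤ (x+δ)^(p+1) - x^(p+1) := ih
    have h30 : 0 ≤ ((p:ℝ)+1) * A^p * δ := by positivity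
    have h4 : A * (((p:ℝ)+1) * A^p * δ) ≤ (x+δ) * ((x+δ)^(p+1) - x^(p+1)) := by
      have h1 : A * (((p:ℝ)+1) * A^p * δ) ≤ (x+δ) * (((p:ℝ)+1) * A^p * δ) :=
        mul_le_mul_of_nonneg_right (by linarith) h30
      have h2 : (x+δ) * (((p:ℝ)+1) * A^p * δ) ≤ (x+δ) * ((x+δ)^(p+1) - x^(p+1)) :=
        mul_le_mul_of_nonneg_left h3 (by linarith)
      linarith
    have h5 : δ * A^(p+1) ≤ δ * x^(p+1) :=
      mul_le_mul_of_nonneg_left (pow_le_pow_left₀ hA hAx (p+1)) hδ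
    have hexp : (x+δ)^(p+2) - x^(p+2) = (x+δ) * ((x+δ)^(p+1) - x^(p+1)) + δ * x^(p+1) := by ring
    have heq : A * (((p:ℝ)+1) * A^p * δ) + δ * A^(p+1) = ((p:ℝ)+1+1) * A^(p+1) * δ := by ring
    push_cast
    nlinarith [h4, h5]





/-- One round of refinement: tokens `0..j-1` have been refined to level `q+1`. -/
noncomputable def innerStep (l a x' : ℝ) (m N q : ℕ) (u : Fin N → ℝ) : ℕ → Fin N → ℝ
  | 0 => u
  | j+1 =>
      let v := innerStep l a x' m N q u j
      if hj : j < N then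
        if x' ≤ ∑ i, (v i + (if (i:ℕ) < j + 1 then l ^ (q+3) else l ^ (q+2))) ^ m then v
        else Function.update v ⟨j, hj⟩ (v ⟨j, hj⟩ + a * l ^ (q + 2))
      else v

/-- State after `q` full rounds. -/
noncomputable def US (l a x' : ℝ) (m N : ℕ) : ℕ → Fin N → ℝ
  | 0 => fun _ => a
  | q+1 => innerStep l a x' m N q (US l a x' m N q) N

variable {l a x' : ℝ} {m N q : ℕ} {u : Fin N → ℝ}

lemma innerStep_eq_of_le : ∀ {j : ℕ} {i : Fin N}, j ≤ (i:ℕ) →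
    innerStep l a x' m N q u j i = u i := by
  intro j
  induction j with
  | zero => intro i _; rfl
  | succ p ih =>
    intro i hpi
    have hpi' : p ≤ (i:ℕ) := by omega
    simp only [innerStep]
    split
    · rename_i hp
      have hne : i ≠ ⟨p, hp⟩ := by
        simp only [ne_eq, Fin.ext_iff]; omega
      split
      · exact ih hpi'
      · rw [Function.update_of_ne hne]; exact ih hpi'
    · exact ih hpi'

lemma innerStep_stable : ∀ {j : ℕ} {i : Fin N}, (i:ℕ) < j →
    innerStep l a x' m N q u j i = innerStep l a x' m N q u ((i:ℕ)+1) i := by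
  intro j
  induction j with
  | zero => intro i h; omega
  | succ p ih =>
    intro i hip
    rcases Nat.lt_or_ge (i:ℕ) p with h | h
    · have hstep : innerStep l a x' m N q u (p+1) i = innerStep l a x' m N q u p i := by
        simp only [innerStep]
        split
        · rename_i hp
          have hne : i ≠ ⟨p, hp⟩ := by
            simp only [ne_eq, Fin.ext_iff]; omega
          split
          · rfl
          · rw [Function.update_of_ne hne]
        · rfl
      rw [hstep]; exact ih h
    · have : (i:ℕ) = p := by omega
      subst this
      rfl

lemma innerStep_incr (i : Fin N) :
    innerStep l a x' m N q u ((i:ℕ)+1) i = u i ∨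
    innerStep l a x' m N q u ((i:ℕ)+1) i = u i + a * l ^ (q+2) := by
  have hv : innerStep l a x' m N q u (i:ℕ) i = u i := innerStep_eq_of_le (le_refl _)
  simp only [innerStep]
  split
  · split
    · left; exact hv
    · right
      have : (⟨(i:ℕ), i.isLt⟩ : Fin N) = i := rfl
      rw [show (⟨(i:ℕ), _⟩ : Fin N) = i from Fin.eta i _, Function.update_self, hv]
  · omega

lemma US_incr (i : Fin N) :
    US l a x' m N (q+1) i = US l a x' m N q i ∨
    US l a x' m N (q+1) i = US l a x' m N q i + a * l ^ (q+2) := by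
  have h1 : US l a x' m N (q+1) i = innerStep l a x' m N q (US l a x' m N q) N i := rfl
  rw [h1, innerStep_stable i.isLt]
  exact innerStep_incr i



/-- The invariant after `q` rounds. -/
def InvP (l a x' : ℝ) (n N q : ℕ) (u : Fin N → ℝ) : Prop :=
  (∀ i, a ≤ u i) ∧ (∀ i, u i + l^(q+2) ≤ a + l^2) ∧
  (∑ i, (u i)^(n+1) ≤ x') ∧ (x' ≤ ∑ i, (u i + l^(q+2))^(n+1))

variable {l a x' : ℝ} {n N q : ℕ}

set_option maxHeartbeats 1000000 in
lemma inv_step (hl0 : 0 < l) (hla : l < a) (hal : a + l = 1)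
    (KEY : (a - l) * (a + l^2)^n ≤ ((N:ℝ) - 1) * l * a^n)
    (hq : InvP l a x' n N q (US l a x' (n+1) N q)) :
    InvP l a x' n N (q+1) (US l a x' (n+1) N (q+1)) := by
  obtain ⟨h1, h2, h3, h4⟩ := hq
  set u := US l a x' (n+1) N q with hu
  have hl1 : l < 1 := by linarith
  have ha0 : 0 < a := lt_trans hl0 hla
  have ha1 : a < 1 := by linarith
  have hlq32 : l^(q+3) ≤ l^(q+2) := by
    rw [pow_succ]
    nlinarith [pow_pos hl0 (q+2)]
  have hlq2 : (0:ℝ) < l^(q+2) := pow_pos hl0 _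
  have hlq3 : (0:ℝ) < l^(q+3) := pow_pos hl0 _
  have key : ∀ j, j ≤ N →
      (∀ i, a ≤ innerStep l a x' (n+1) N q u j i) ∧
      (∀ i : Fin N, innerStep l a x' (n+1) N q u j i
        + (if (i:ℕ) < j then l^(q+3) else l^(q+2)) ≤ a + l^2) ∧
      (∑ i, (innerStep l a x' (n+1) N q u j i)^(n+1) ≤ x') ∧
      (x' ≤ ∑ i, (innerStep l a x' (n+1) N q u j i
        + (if (i:ℕ) < j then l^(q+3) else l^(q+2)))^(n+1)) := by
    intro j
    induction j with
    | zero =>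
      intro _
      simp only [innerStep, Nat.not_lt_zero, if_false]
      exact ⟨h1, h2, h3, h4⟩
    | succ j ih =>
      intro hjN
      have hj : j < N := by omega
      obtain ⟨ih1, ih2, ih3, ih4⟩ := ih (by omega)
      set v := innerStep l a x' (n+1) N q u j with hv
      set jj : Fin N := ⟨j, hj⟩ with hjj
      have hstep : innerStep l a x' (n+1) N q u (j+1) =
          if x' ≤ ∑ i, (v i + (if (i:ℕ) < j + 1 then l ^ (q+3) else l ^ (q+2))) ^ (n+1) then v
          else Function.update v jj (v jj + a * l ^ (q + 2)) := by
        simp only [innerStep, ← hv, dif_pos hj]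
        rfl
      by_cases hcond : x' ≤ ∑ i, (v i + (if (i:ℕ) < j + 1 then l ^ (q+3) else l ^ (q+2))) ^ (n+1)
      · rw [hstep, if_pos hcond]
        refine ⟨ih1, ?_, ih3, hcond⟩
        intro i
        by_cases hij : (i:ℕ) < j + 1
        · rw [if_pos hij]
          have := ih2 i
          by_cases hij' : (i:ℕ) < j
          · rw [if_pos hij'] at this; exact this
          · rw [if_neg hij'] at this; linarith
        · rw [if_neg hij]
          have := ih2 i
          rw [if_neg (by omega)] at this
          exact this
      · rw [hstep, if_neg hcond]
        set w := Function.update v jj (v jj + a * l ^ (q + 2)) with hw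
        have hwjj : w jj = v jj + a * l ^ (q+2) := Function.update_self _ _ _
        have hwne : ∀ i : Fin N, i ≠ jj → w i = v i := fun i hi =>
          Function.update_of_ne hi _ _
        have halq : a * l^(q+2) + l^(q+3) = l^(q+2) := by
          have : l^(q+3) = l * l^(q+2) := by ring
          rw [this]; nlinarith [hlq2]
        -- the old bound for token jj
        have hvjjb : v jj + l^(q+2) ≤ a + l^2 := by
          have := ih2 jj
          rw [if_neg (by simp [hjj])] at this
          exact this
        constructor
        · intro i
          by_cases hi : i = jj
          · rw [hi, hwjj]
            have := ih1 jj
            nlinarith [hlq2]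
          · rw [hwne i hi]; exact ih1 i
        constructor
        · intro i
          by_cases hi : i = jj
          · rw [hi, hwjj, if_pos (by simp [hjj])]
            linarith [hvjjb, halq]
          · rw [hwne i hi]
            have hvali : (i:ℕ) ≠ j := fun h => hi (Fin.ext h)
            by_cases hij : (i:ℕ) < j + 1
            · rw [if_pos hij]
              have := ih2 i
              rw [if_pos (by omega)] at this
              exact this
            · rw [if_neg hij]
              have := ih2 i
              rw [if_neg (by omega)] at this
              exact this
        constructor
        · -- the key lower-sum bound
          push_neg at hcond
          have hjmem : jj ∈ Finset.univ := Finset.mem_univ _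
          have hsplit1 : ∑ i, (w i)^(n+1)
              = (v jj + a * l^(q+2))^(n+1) + ∑ i ∈ Finset.univ.erase jj, (v i)^(n+1) := by
            rw [← Finset.add_sum_erase _ _ hjmem, hwjj]
            congr 1
            exact Finset.sum_congr rfl fun i hi => by
              rw [hwne i (Finset.ne_of_mem_erase hi)]
          have hsplit2 : ∑ i, (v i + (if (i:ℕ) < j + 1 then l ^ (q+3) else l ^ (q+2)))^(n+1)
              = (v jj + l^(q+3))^(n+1)
                + ∑ i ∈ Finset.univ.erase jj,
                    (v i + (if (i:ℕ) < j + 1 then l ^ (q+3) else l ^ (q+2)))^(n+1) := by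
            rw [← Finset.add_sum_erase _ _ hjmem]
            congr 2
            rw [if_pos (by simp [hjj])]
          -- gap bound
          have hgap : (v jj + a * l^(q+2))^(n+1) - (v jj + l^(q+3))^(n+1)
              ≤ ((n:ℝ)+1) * (a + l^2)^n * ((a-l) * l^(q+2)) := by
            have hx0 : (0:ℝ) ≤ v jj + l^(q+3) := by
              have := ih1 jj; linarith
            have hd0 : (0:ℝ) ≤ (a-l) * l^(q+2) := by
              have h' : 0 ≤ a - l := by linarith
              exact mul_nonneg h' (le_of_lt hlq2)
            have hxd : v jj + l^(q+3) + (a-l) * l^(q+2) = v jj + a * l^(q+2) := by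
              have : l^(q+3) = l * l^(q+2) := by ring
              rw [this]; ring
            have hB : v jj + l^(q+3) + (a-l) * l^(q+2) ≤ a + l^2 := by
              rw [hxd]
              nlinarith [hvjjb, hlq2]
            have := pow_diff_le n hx0 hd0 hB
            rw [hxd] at this
            push_cast at this ⊢
            linarith
          -- each other token's diameter bound
          have hterm : ∀ i ∈ Finset.univ.erase jj,
              ((n:ℝ)+1) * a^n * l^(q+3)
              ≤ (v i + (if (i:ℕ) < j + 1 then l ^ (q+3) else l ^ (q+2)))^(n+1) - (v i)^(n+1) := by
            intro i _
            set δ : ℝ := if (i:ℕ) < j + 1 then l ^ (q+3) else l ^ (q+2) with hδ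
            have hδ3 : l^(q+3) ≤ δ := by
              rw [hδ]; split
              · exact le_refl _
              · exact hlq32
            have hδ0 : 0 ≤ δ := le_trans (le_of_lt hlq3) hδ3
            have h := le_pow_diff n (le_of_lt ha0) (ih1 i) hδ0
            have h2' : ((n:ℝ)+1) * a^n * l^(q+3) ≤ ((n:ℝ)+1) * a^n * δ := by
              have : (0:ℝ) ≤ ((n:ℝ)+1) * a^n := by positivity
              nlinarith
            linarith
          have hcard : (Finset.univ.erase jj).card = N - 1 := by
            rw [Finset.card_erase_of_mem hjmem, Finset.card_univ, Fintype.card_fin]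
          have hsumlb : ((N:ℝ) - 1) * (((n:ℝ)+1) * a^n * l^(q+3))
              ≤ ∑ i ∈ Finset.univ.erase jj,
                  ((v i + (if (i:ℕ) < j + 1 then l ^ (q+3) else l ^ (q+2)))^(n+1) - (v i)^(n+1)) := by
            have := Finset.card_nsmul_le_sum (Finset.univ.erase jj) _ _ hterm
            rw [hcard, nsmul_eq_mul] at this
            have hN1 : ((N - 1 : ℕ):ℝ) = (N:ℝ) - 1 := by
              have : 1 ≤ N := by omega
              push_cast [this]; ring
            rw [hN1] at this
            exact this
          have hsumdiff : ∑ i ∈ Finset.univ.erase jj,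
                  ((v i + (if (i:ℕ) < j + 1 then l ^ (q+3) else l ^ (q+2)))^(n+1) - (v i)^(n+1))
              = (∑ i ∈ Finset.univ.erase jj,
                  (v i + (if (i:ℕ) < j + 1 then l ^ (q+3) else l ^ (q+2)))^(n+1))
                - ∑ i ∈ Finset.univ.erase jj, (v i)^(n+1) :=
            Finset.sum_sub_distrib _ _
          -- key numeric chain
          have hchain : ((n:ℝ)+1) * (a + l^2)^n * ((a-l) * l^(q+2))
              ≤ ((N:ℝ) - 1) * (((n:ℝ)+1) * a^n * l^(q+3)) := by
            have hml : (0:ℝ) ≤ ((n:ℝ)+1) * l^(q+2) := by positivity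
            have h' := mul_le_mul_of_nonneg_left KEY hml
            calc ((n:ℝ)+1) * (a + l^2)^n * ((a-l) * l^(q+2))
                = ((n:ℝ)+1) * l^(q+2) * ((a - l) * (a + l^2)^n) := by ring
              _ ≤ ((n:ℝ)+1) * l^(q+2) * (((N:ℝ) - 1) * l * a^n) := h'
              _ = ((N:ℝ) - 1) * (((n:ℝ)+1) * a^n * l^(q+3)) := by ring
          rw [hsplit1]
          rw [hsplit2] at hcond
          rw [hsumdiff] at hsumlb
          linarith
        · -- upper sum bound: equals the old one
          have : ∑ i, (w i + (if (i:ℕ) < j + 1 then l ^ (q+3) else l ^ (q+2)))^(n+1)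
              = ∑ i, (v i + (if (i:ℕ) < j then l ^ (q+3) else l ^ (q+2)))^(n+1) := by
            refine Finset.sum_congr rfl fun i _ => ?_
            by_cases hi : i = jj
            · rw [hi, hwjj, if_pos (by simp [hjj]), if_neg (by simp [hjj])]
              congr 1
              linarith [halq]
            · have hvali : (i:ℕ) ≠ j := fun h => hi (Fin.ext h)
              rw [hwne i hi]
              congr 2
              by_cases hij : (i:ℕ) < j
              · rw [if_pos hij, if_pos (by omega)]
              · rw [if_neg hij, if_neg (by omega)]
          rw [this]
          exact ih4
  -- instantiate at j = N
  obtain ⟨k1, k2, k3, k4⟩ := key N (le_refl N)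
  have hUS : US l a x' (n+1) N (q+1) = innerStep l a x' (n+1) N q u N := rfl
  refine ⟨by rw [hUS]; exact k1, ?_, by rw [hUS]; exact k3, ?_⟩
  · intro i
    have := k2 i
    rw [if_pos i.isLt] at this
    rw [hUS]
    exact this
  · rw [hUS]
    calc x' ≤ ∑ i, (innerStep l a x' (n+1) N q u N i
        + (if (i:ℕ) < N then l^(q+3) else l^(q+2)))^(n+1) := k4
      _ = ∑ i, (innerStep l a x' (n+1) N q u N i + l^(q+1+2))^(n+1) := by
          refine Finset.sum_congr rfl fun i _ => by rw [if_pos i.isLt]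


lemma inv_all (hl0 : 0 < l) (hla : l < a) (hal : a + l = 1)
    (KEY : (a - l) * (a + l^2)^n ≤ ((N:ℝ) - 1) * l * a^n)
    (hlo : (N:ℝ) * a^(n+1) ≤ x') (hhi : x' ≤ (N:ℝ) * (a + l^2)^(n+1)) :
    ∀ q, InvP l a x' n N q (US l a x' (n+1) N q) := by
  intro q
  induction q with
  | zero =>
    refine ⟨fun i => le_refl _, fun i => le_refl _, ?_, ?_⟩
    · calc ∑ _i : Fin N, a^(n+1) = (N:ℝ) * a^(n+1) := by
            rw [Finset.sum_const, Finset.card_univ, Fintype.card_fin, nsmul_eq_mul]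
        _ ≤ x' := hlo
    · calc x' ≤ (N:ℝ) * (a + l^2)^(n+1) := hhi
        _ = ∑ _i : Fin N, (a + l^(0+2))^(n+1) := by
            rw [Finset.sum_const, Finset.card_univ, Fintype.card_fin, nsmul_eq_mul]
  | succ q ihq => exact inv_step hl0 hla hal KEY ihq



/-- digit sequence of token `i` read off from the construction -/
noncomputable def epsAux (l a x' : ℝ) (m N : ℕ) (i : Fin N) : ℕ → ℝ
  | 0 => 1
  | 1 => 0
  | (q+2) => if US l a x' m N (q+1) i = US l a x' m N q i then 0 else 1

variable {l a x' : ℝ} {n N : ℕ}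

lemma eps01 (m : ℕ) (i : Fin N) (nn : ℕ) :
    epsAux l a x' m N i nn = 0 ∨ epsAux l a x' m N i nn = 1 := by
  match nn with
  | 0 => right; rfl
  | 1 => left; rfl
  | (q+2) =>
    simp only [epsAux]
    split
    · left; rfl
    · right; rfl

lemma eps_partial (m : ℕ) (i : Fin N) (ha0 : 0 < a) (hl0 : 0 < l) :
    ∀ q, ∑ nn ∈ Finset.range (q+2), epsAux l a x' m N i nn * a * l ^ nn
      = US l a x' m N q i := by
  intro q
  induction q with
  | zero =>
    rw [Finset.sum_range_succ, Finset.sum_range_one]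
    simp only [epsAux]
    show (1:ℝ) * a * l ^ 0 + 0 * a * l ^ 1 = a
    ring
  | succ q ihq =>
    rw [Finset.sum_range_succ, ihq]
    rcases US_incr (l := l) (a := a) (x' := x') (m := m) (q := q) i with h | h
    · simp only [epsAux, if_pos h]
      rw [h]; ring
    · have hne : US l a x' m N (q+1) i ≠ US l a x' m N q i := by
        rw [h]
        intro hcc
        have : a * l^(q+2) = 0 := by linarith
        have : (0:ℝ) < a * l^(q+2) := by positivity
        linarith
      simp only [epsAux, if_neg hne]
      rw [h]; ring

set_option maxHeartbeats 1600000 in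
theorem exists_rep (l a x' : ℝ) (n N : ℕ) (hl0 : 0 < l) (hla : l < a) (hal : a + l = 1)
    (KEY : (a - l) * (a + l^2)^n ≤ ((N:ℝ) - 1) * l * a^n)
    (hlo : (N:ℝ) * a^(n+1) ≤ x') (hhi : x' ≤ (N:ℝ) * (a + l^2)^(n+1)) :
    ∃ c : Fin N → ℝ,
      (∀ i, ∃ ε : ℕ → ℝ, (∀ jd, ε jd = 0 ∨ ε jd = 1) ∧ c i = ∑' nn, ε nn * a * l ^ nn) ∧
      x' = ∑ i, (c i) ^ (n+1) := by
  have ha0 : 0 < a := lt_trans hl0 hla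
  have hl1 : l < 1 := by linarith
  have hgeom : Summable (fun nn : ℕ => l ^ nn) :=
    summable_geometric_of_lt_one (le_of_lt hl0) hl1
  have hsumm : ∀ i : Fin N, Summable (fun nn => epsAux l a x' (n+1) N i nn * a * l ^ nn) := by
    intro i
    refine Summable.of_nonneg_of_le ?_ ?_ (hgeom.mul_left a)
    · intro nn
      rcases eps01 (n+1) i nn with h | h <;> rw [h] <;> positivity
    · intro nn
      rcases eps01 (n+1) i nn with h | h <;> rw [h]
      · rw [zero_mul, zero_mul]; positivity
      · rw [one_mul]
  set c : Fin N → ℝ := fun i => ∑' nn, epsAux l a x' (n+1) N i nn * a * l ^ nn with hc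
  have hbound : ∀ (q : ℕ) (i : Fin N),
      US l a x' (n+1) N q i ≤ c i ∧ c i ≤ US l a x' (n+1) N q i + l ^ (q+2) := by
    intro q i
    have hsplit := Summable.sum_add_tsum_nat_add (q+2) (hsumm i)
    rw [eps_partial (n+1) i ha0 hl0 q] at hsplit
    have htail0 : 0 ≤ ∑' nn, epsAux l a x' (n+1) N i (nn + (q+2)) * a * l ^ (nn + (q+2)) := by
      apply tsum_nonneg
      intro nn
      rcases eps01 (n+1) i (nn + (q+2)) with h | h <;> rw [h] <;> positivity
    have hgeo2 : Summable (fun nn : ℕ => a * l ^ (nn + (q+2))) := by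
      have : (fun nn : ℕ => a * l ^ (nn + (q+2))) = fun nn => (a * l ^ (q+2)) * l ^ nn := by
        funext nn; rw [pow_add]; ring
      rw [this]
      exact hgeom.mul_left _
    have htail1 : ∑' nn, epsAux l a x' (n+1) N i (nn + (q+2)) * a * l ^ (nn + (q+2))
        ≤ ∑' nn : ℕ, a * l ^ (nn + (q+2)) := by
      apply Summable.tsum_le_tsum
      · intro nn
        rcases eps01 (n+1) i (nn + (q+2)) with h | h <;> rw [h]
        · rw [zero_mul, zero_mul]; positivity
        · rw [one_mul]
      · exact (summable_nat_add_iff (q+2)).2 (hsumm i)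
      · exact hgeo2
    have htailval : ∑' nn : ℕ, a * l ^ (nn + (q+2)) = l ^ (q+2) := by
      have h1 : (fun nn : ℕ => a * l ^ (nn + (q+2))) = fun nn => (a * l ^ (q+2)) * l ^ nn := by
        funext nn; rw [pow_add]; ring
      rw [h1, tsum_mul_left, tsum_geometric_of_lt_one (le_of_lt hl0) hl1]
      have : (1 : ℝ) - l = a := by linarith
      rw [this]
      field_simp
    constructor
    · have : c i = US l a x' (n+1) N q i
          + ∑' nn, epsAux l a x' (n+1) N i (nn + (q+2)) * a * l ^ (nn + (q+2)) := by
        rw [hc]; exact hsplit.symm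
      linarith
    · have : c i = US l a x' (n+1) N q i
          + ∑' nn, epsAux l a x' (n+1) N i (nn + (q+2)) * a * l ^ (nn + (q+2)) := by
        rw [hc]; exact hsplit.symm
      rw [this]
      have := le_trans htail1 (le_of_eq htailval)
      linarith
  refine ⟨c, fun i => ⟨epsAux l a x' (n+1) N i, eps01 (n+1) i, rfl⟩, ?_⟩
  -- squeeze
  have hInv := inv_all hl0 hla hal KEY hlo hhi
  set S := ∑ i, (c i) ^ (n+1) with hS
  have hkey : ∀ q : ℕ, |x' - S| ≤ ((N:ℝ) * ((n:ℝ)+1) * l^2) * l ^ q := by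
    intro q
    obtain ⟨i1, i2, i3, i4⟩ := hInv q
    set U := US l a x' (n+1) N q with hU
    have hc1 : ∀ i, (U i)^(n+1) ≤ (c i)^(n+1) := by
      intro i
      exact pow_le_pow_left₀ (le_trans (le_of_lt ha0) (i1 i)) (hbound q i).1 _
    have hc2 : ∀ i, (c i)^(n+1) ≤ (U i + l^(q+2))^(n+1) := by
      intro i
      have h0 : 0 ≤ c i := le_trans (le_trans (le_of_lt ha0) (i1 i)) (hbound q i).1
      exact pow_le_pow_left₀ h0 (hbound q i).2 _
    have hSl : ∑ i, (U i)^(n+1) ≤ S := Finset.sum_le_sum fun i _ => hc1 i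
    have hSu : S ≤ ∑ i, (U i + l^(q+2))^(n+1) := Finset.sum_le_sum fun i _ => hc2 i
    have hdiff : ∑ i, (U i + l^(q+2))^(n+1) - ∑ i, (U i)^(n+1)
        ≤ (N:ℝ) * (((n:ℝ)+1) * l^(q+2)) := by
      have hterm : ∀ i : Fin N, (U i + l^(q+2))^(n+1) - (U i)^(n+1)
          ≤ ((n:ℝ)+1) * l^(q+2) := by
        intro i
        have hx0 : 0 ≤ U i := le_trans (le_of_lt ha0) (i1 i)
        have hδ0 : (0:ℝ) ≤ l^(q+2) := by positivity
        have hB : U i + l^(q+2) ≤ 1 := by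
          have := i2 i
          have hle : a + l^2 ≤ 1 := by nlinarith
          linarith
        have := pow_diff_le n hx0 hδ0 hB
        rw [one_pow] at this
        push_cast at this
        linarith
      calc ∑ i, (U i + l^(q+2))^(n+1) - ∑ i, (U i)^(n+1)
          = ∑ i : Fin N, ((U i + l^(q+2))^(n+1) - (U i)^(n+1)) := by
            rw [Finset.sum_sub_distrib]
        _ ≤ ∑ _i : Fin N, ((n:ℝ)+1) * l^(q+2) := Finset.sum_le_sum fun i _ => hterm i
        _ = (N:ℝ) * (((n:ℝ)+1) * l^(q+2)) := by
            rw [Finset.sum_const, Finset.card_univ, Fintype.card_fin, nsmul_eq_mul]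
    have habs : |x' - S| ≤ (N:ℝ) * (((n:ℝ)+1) * l^(q+2)) := by
      rw [abs_le]
      constructor <;> nlinarith
    calc |x' - S| ≤ (N:ℝ) * (((n:ℝ)+1) * l^(q+2)) := habs
      _ = ((N:ℝ) * ((n:ℝ)+1) * l^2) * l ^ q := by ring
  have hlim : Filter.Tendsto (fun q : ℕ => ((N:ℝ) * ((n:ℝ)+1) * l^2) * l ^ q)
      Filter.atTop (nhds 0) := by
    have := tendsto_pow_atTop_nhds_zero_of_lt_one (le_of_lt hl0) hl1
    have h2 := this.const_mul ((N:ℝ) * ((n:ℝ)+1) * l^2)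
    simpa using h2
  have : |x' - S| ≤ 0 := ge_of_tendsto' hlim hkey
  have : x' - S = 0 := by
    have h0 : 0 ≤ |x' - S| := abs_nonneg _
    have : |x' - S| = 0 := le_antisymm this h0
    exact abs_eq_zero.mp this
  linarith


end CantorGamma

set_option maxHeartbeats 1600000 in
/-- The interval `I_{(t)}` is contained in `Γ_{α,m}`, for `1 ≤ t ≤ r_{α,m}/2`. -/
theorem interval_t_lower_subset_Gamma (α : ℝ) (hα : α ∈ Set.Ioo (0 : ℝ) 1) (m : ℕ) (hm : 0 < m)
    (t : ℕ) (ht1 : 1 ≤ t) (ht2 : 2 * t ≤ rCount α m) :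
    Set.Icc
      (((rCount α m : ℝ) / 2 + 1) * ((1 + α) / 2) ^ m
        + ((t : ℝ) - 1) * ((3 + α ^ 2) / 4) ^ m
        + ((rCount α m : ℝ) / 2 - t))
      (((rCount α m : ℝ) / 2 - 1) * ((1 + α) / 2) ^ m
        + ((t : ℝ) + 1) * ((3 + α ^ 2) / 4) ^ m
        + ((rCount α m : ℝ) / 2 - t))
      ⊆ Gam α m := by
  obtain ⟨hα0, hα1⟩ := hα
  obtain ⟨n, rfl⟩ : ∃ n, m = n + 1 := ⟨m - 1, (Nat.succ_pred_eq_of_pos hm).symm⟩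
  intro x hx
  obtain ⟨hx1, hx2⟩ := hx
  set l : ℝ := (1 - α) / 2 with hl
  set a : ℝ := (1 + α) / 2 with ha
  have hl0 : 0 < l := by rw [hl]; linarith
  have hla : l < a := by rw [hl, ha]; linarith
  have hal : a + l = 1 := by rw [hl, ha]; ring
  have ha0 : 0 < a := lt_trans hl0 hla
  have hl1 : l < 1 := by linarith
  have hbeq : ((3 + α ^ 2) / 4 : ℝ) = a + l ^ 2 := by rw [ha, hl]; ring
  have hab : a ≤ a + l ^ 2 := by nlinarith
  have hb1 : a + l ^ 2 ≤ 1 := by nlinarith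
  set s : ℕ := sCount α (n + 1) with hs
  set k : ℕ := kCount α (n + 1) with hk
  have hr : rCount α (n + 1) = 2 * s + 2 * k := rfl
  -- basic counting facts
  have hsge : (2 / (1 + α)) ^ n ≤ (s : ℝ) := by
    rw [hs, sCount]
    simpa using Nat.le_ceil ((2 / (1 + α)) ^ ((n + 1) - 1))
  have hs1 : 1 ≤ s := by
    rw [hs, sCount]
    have : (0:ℝ) < (2 / (1 + α)) ^ ((n+1) - 1) := by positivity
    exact Nat.one_le_iff_ne_zero.mpr (by
      intro h0
      have := Nat.ceil_eq_zero.mp h0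
      nlinarith)
  have hts : t ≤ s + k := by omega
  set N : ℕ := s + k + t with hN
  have hNr : N ≤ 2 * s + 2 * k := by omega
  -- s * a^n ≥ 1
  have hinv : (2 / (1 + α) : ℝ) = 1 / a := by rw [ha, one_div_div]
  have hsan : 1 ≤ (s:ℝ) * a ^ n := by
    have h1 : (1/a)^n * a^n = 1 := by
      rw [← mul_pow, one_div_mul_cancel ha0.ne', one_pow]
    have h2 : (1/a)^n ≤ (s:ℝ) := by rw [← hinv]; exact hsge
    have h3 : (0:ℝ) ≤ a^n := by positivity
    nlinarith
  -- the key numeric inequality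
  have hαlan : α ≤ ((s:ℝ) + (k:ℝ)) * (l * a ^ n) := by
    by_cases hα3 : 1 / 3 < α
    · -- k is nontrivial
      have hkge : ((3 * α - 1) / 2) / (a ^ n * (l * a)) ≤ (k : ℝ) := by
        have e1 : ((1 + α)/2) ^ ((n+1) - 1) * ((1 - α ^ 2) / 4) = a ^ n * (l * a) := by
          simp only [Nat.add_sub_cancel]
          rw [ha, hl]; ring
        rw [hk, kCount, if_pos hα3, ← e1]
        exact_mod_cast Nat.le_ceil _
      have hD : (0:ℝ) < a ^ n * (l * a) := by positivity
      have hklan : (3 * α - 1) / (2 * a) ≤ (k:ℝ) * (l * a ^ n) := by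
        have h2 := mul_le_mul_of_nonneg_right hkge (by positivity : (0:ℝ) ≤ l * a ^ n)
        have h3 : ((3 * α - 1) / 2) / (a ^ n * (l * a)) * (l * a ^ n) = (3 * α - 1) / (2 * a) := by
          field_simp
        rw [h3] at h2
        exact h2
      have hslan : l ≤ (s:ℝ) * (l * a ^ n) := by nlinarith
      have hfin : α ≤ l + (3 * α - 1) / (2 * a) := by
        have he : l + (3 * α - 1) / (2 * a) - α = (1 - α) * (3 * α - 1) / (4 * a) := by
          rw [hl, ha]; field_simp; ring
        have hpos : 0 ≤ (1 - α) * (3 * α - 1) / (4 * a) := by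
          have h1 : 0 ≤ (1 - α) := by linarith
          have h2 : 0 ≤ (3 * α - 1) := by linarith
          positivity
        linarith
      nlinarith
    · -- α ≤ 1/3 : already s alone suffices
      push_neg at hα3
      have hαl : α ≤ l := by rw [hl]; linarith
      have hk0 : (0:ℝ) ≤ (k:ℝ) := Nat.cast_nonneg _
      have h4 : l ≤ (s:ℝ) * (l * a ^ n) := by nlinarith
      nlinarith [mul_nonneg hk0 (by positivity : (0:ℝ) ≤ l * a ^ n)]
  have KEY : (a - l) * (a + l ^ 2) ^ n ≤ ((N:ℝ) - 1) * l * a ^ n := by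
    have hd : a - l = α := by rw [ha, hl]; ring
    have hbn : (a + l ^ 2) ^ n ≤ 1 := pow_le_one₀ (by positivity) hb1
    have hN1 : ((s:ℝ) + (k:ℝ)) ≤ (N:ℝ) - 1 := by
      rw [hN]
      push_cast
      have : (1:ℝ) ≤ (t:ℝ) := by exact_mod_cast ht1
      linarith
    have h5 : α * (a + l^2)^n ≤ α := by nlinarith
    have h6 : ((s:ℝ) + (k:ℝ)) * (l * a ^ n) ≤ ((N:ℝ) - 1) * (l * a ^ n) :=
      mul_le_mul_of_nonneg_right hN1 (by positivity)
    calc (a - l) * (a + l ^ 2) ^ n = α * (a + l^2)^n := by rw [hd]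
      _ ≤ α := h5
      _ ≤ ((s:ℝ) + (k:ℝ)) * (l * a ^ n) := hαlan
      _ ≤ ((N:ℝ) - 1) * (l * a ^ n) := h6
      _ = ((N:ℝ) - 1) * l * a ^ n := by ring
  -- endpoints
  have hhalf : (rCount α (n+1) : ℝ) / 2 = (s:ℝ) + (k:ℝ) := by
    rw [hr]; push_cast; ring
  have hcast : ((s + k - t : ℕ) : ℝ) = (s:ℝ) + (k:ℝ) - (t:ℝ) := by
    have := hts
    push_cast [Nat.cast_sub (by omega : t ≤ s + k)]
    ring
  set x' : ℝ := x - ((s + k - t : ℕ) : ℝ) with hx'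
  have hbm : a ^ (n+1) ≤ (a + l^2) ^ (n+1) := pow_le_pow_left₀ (le_of_lt ha0) hab _
  have ht1R : (1:ℝ) ≤ (t:ℝ) := by exact_mod_cast ht1
  have hs1R : (1:ℝ) ≤ (s:ℝ) + (k:ℝ) := by
    have : (1:ℝ) ≤ (s:ℝ) := by exact_mod_cast hs1
    have : (0:ℝ) ≤ (k:ℝ) := Nat.cast_nonneg _
    linarith
  have hNR : (N:ℝ) = (s:ℝ) + (k:ℝ) + (t:ℝ) := by rw [hN]; push_cast; ring
  have hlo : (N:ℝ) * a ^ (n+1) ≤ x' := by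
    rw [hbeq, hhalf] at hx1
    rw [hx', hcast, hNR]
    nlinarith
  have hhi : x' ≤ (N:ℝ) * (a + l ^ 2) ^ (n+1) := by
    rw [hbeq, hhalf] at hx2
    rw [hx', hcast, hNR]
    nlinarith
  -- the construction
  obtain ⟨c, hcmem, hcsum⟩ :=
    CantorGamma.exists_rep l a x' n N hl0 hla hal KEY hlo hhi
  -- build the full tuple
  set cN : ℕ → ℝ := fun j => if h : j < N then c ⟨j, h⟩ else 1 with hcN
  refine ⟨fun i => cN (i : ℕ), ?_, ?_⟩
  · intro i
    by_cases hiN : (i:ℕ) < N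
    · obtain ⟨ε, hε01, hεsum⟩ := hcmem ⟨(i:ℕ), hiN⟩
      refine ⟨ε, hε01, ?_⟩
      rw [hcN]
      simp only [dif_pos hiN]
      rw [hεsum, ha, hl]
    · refine ⟨fun _ => 1, fun _ => Or.inr rfl, ?_⟩
      rw [hcN]
      simp only [dif_neg hiN]
      have hgeom : ∑' nn : ℕ, (1:ℝ) * ((1 + α)/2) * ((1 - α)/2) ^ nn
          = ((1 + α)/2) * (1 - (1 - α)/2)⁻¹ := by
        simp only [one_mul]
        rw [tsum_mul_left, tsum_geometric_of_lt_one (by linarith) (by rw [← hl]; exact hl1)]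
      rw [hgeom]
      have : (1 : ℝ) - (1 - α)/2 = (1 + α)/2 := by ring
      rw [this]
      rw [mul_inv_cancel₀ (by linarith : ((1 + α)/2 : ℝ) ≠ 0)]
  · -- the sum
    have hfin : ∑ i : Fin (rCount α (n+1)), cN (i:ℕ) ^ (n+1)
        = ∑ j ∈ Finset.range (rCount α (n+1)), cN j ^ (n+1) :=
      Fin.sum_univ_eq_sum_range (fun j => cN j ^ (n+1)) _
    have hsplit : ∑ j ∈ Finset.range (rCount α (n+1)), cN j ^ (n+1)
        = ∑ j ∈ Finset.range N, cN j ^ (n+1)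
          + ∑ j ∈ Finset.Ico N (rCount α (n+1)), cN j ^ (n+1) := by
      exact (Finset.sum_range_add_sum_Ico _ (by rw [hr]; exact hNr)).symm
    have hN1 : ∑ j ∈ Finset.range N, cN j ^ (n+1) = ∑ i : Fin N, c i ^ (n+1) := by
      rw [← Fin.sum_univ_eq_sum_range (fun j => cN j ^ (n+1)) N]
      refine Finset.sum_congr rfl fun i _ => ?_
      rw [hcN]
      simp only [dif_pos i.isLt]
    have hN2 : ∑ j ∈ Finset.Ico N (rCount α (n+1)), cN j ^ (n+1)
        = ((rCount α (n+1) - N : ℕ) : ℝ) := by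
      have : ∀ j ∈ Finset.Ico N (rCount α (n+1)), cN j ^ (n+1) = 1 := by
        intro j hj
        obtain ⟨hj1, _⟩ := Finset.mem_Ico.mp hj
        rw [hcN]
        simp only [dif_neg (by omega : ¬ j < N)]
        exact one_pow _
      rw [Finset.sum_congr rfl this, Finset.sum_const, Nat.card_Ico, nsmul_eq_mul, mul_one]
    have hrN : ((rCount α (n+1) - N : ℕ) : ℝ) = ((s + k - t : ℕ) : ℝ) := by
      congr 1
      rw [hr]; omega
    rw [hfin, hsplit, hN1, hN2, hrN, ← hcsum]
    rw [hx']
    ring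
end

section
/- Let α ∈ (0,1) and let m be a positive integer such that 2 + ((1+α)/2)^m ≥ 3·((1+α)/2)^m·((3−α)/2)^m. Then Γ_{α,m} contains a closed interval I' of length 2 + (r_{α,m}/2 − 3)·((1+α)/2)^m·((3−α)/2)^m − (r_{α,m}/2 − 1)·((1+α)/2)^m; namely the union over t = 1, …, r_{α,m}/2 of the intervals I^{(t)} = [ (r_{α,m}/2 − t)·((1+α)/2)^m + (t+1)·((1+α)/2)^m·((3−α)/2)^m + (r_{α,m}/2 − 1) , (r_{α,m}/2 − t)·((1+α)/2)^m + (t−1)·((1+α)/2)^m·((3−α)/2)^m + (r_{α,m}/2 + 1) ] is a single closed interval of that length contained in Γ_{α,m}. -/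
set_option maxHeartbeats 1000000


open scoped BigOperators Classical

/-- Left endpoint of the interval `I^{(t)}`. -/
noncomputable def leftEP (α : ℝ) (m t : ℕ) : ℝ :=
  ((rCount α m : ℝ) / 2 - t) * ((1 + α) / 2) ^ m
    + ((t : ℝ) + 1) * (((1 + α) / 2) ^ m * ((3 - α) / 2) ^ m)
    + ((rCount α m : ℝ) / 2 - 1)

/-- Right endpoint of the interval `I^{(t)}`. -/
noncomputable def rightEP (α : ℝ) (m t : ℕ) : ℝ :=
  ((rCount α m : ℝ) / 2 - t) * ((1 + α) / 2) ^ m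
    + ((t : ℝ) - 1) * (((1 + α) / 2) ^ m * ((3 - α) / 2) ^ m)
    + ((rCount α m : ℝ) / 2 + 1)


lemma lemA (k : ℕ) {a b : ℝ} (hb : 0 ≤ b) (hba : b ≤ a) (ha : a ≤ 1) :
    a ^ k - b ^ k ≤ k * (a - b) := by
  induction k with
  | zero => simp
  | succ n ih =>
    have h2 : 0 ≤ a ^ n - b ^ n := sub_nonneg.2 (pow_le_pow_left₀ hb hba n)
    have ha0 : 0 ≤ a := hb.trans hba
    have h3 : b ^ n ≤ 1 := pow_le_one₀ hb (hba.trans ha)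
    rw [pow_succ, pow_succ]
    push_cast
    nlinarith [pow_nonneg hb n, pow_nonneg ha0 n]

lemma lemB (k : ℕ) {a b : ℝ} (hb : 0 ≤ b) (hba : b ≤ a) :
    ((k : ℝ) + 1) * (a - b) * b ^ k ≤ a ^ (k + 1) - b ^ (k + 1) := by
  induction k with
  | zero => simp
  | succ n ih =>
    have ha0 : 0 ≤ a := hb.trans hba
    have h1 : (((n : ℝ) + 1) * (a - b) * b ^ n) * a ≤ (a ^ (n + 1) - b ^ (n + 1)) * a :=
      mul_le_mul_of_nonneg_right ih ha0
    have h2 : 0 ≤ ((n : ℝ) + 1) * ((a - b) * b ^ n * (a - b)) :=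
      mul_nonneg (by positivity)
        (mul_nonneg (mul_nonneg (sub_nonneg.2 hba) (pow_nonneg hb n)) (sub_nonneg.2 hba))
    have hbs : b ^ (n + 1) = b ^ n * b := pow_succ b n
    have hmono : ((n : ℝ) + 1) * (a - b) * b ^ n * b ≤ ((n : ℝ) + 1) * (a - b) * b ^ n * a :=
      mul_le_mul_of_nonneg_left hba
        (mul_nonneg (mul_nonneg (by positivity) (sub_nonneg.2 hba)) (pow_nonneg hb n))
    rw [pow_succ a (n+1), pow_succ b (n+1)]
    push_cast
    calc ((n : ℝ) + 1 + 1) * (a - b) * b ^ (n + 1)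
        = ((n : ℝ) + 1) * (a - b) * b ^ n * b + b ^ n * b * (a - b) := by rw [hbs]; ring
      _ ≤ ((n : ℝ) + 1) * (a - b) * b ^ n * a + b ^ n * b * (a - b) := by linarith
      _ ≤ (a ^ (n + 1) - b ^ (n + 1)) * a + b ^ n * b * (a - b) := by linarith
      _ = a ^ (n + 1) * a - b ^ (n + 1) * b := by rw [hbs]; ring

lemma chainLemma (f g : ℕ → ℝ) (A B : ℕ) (hAB : A ≤ B) (y : ℝ)
    (h0 : f A ≤ y) (h1 : y ≤ g B) (hstep : ∀ t, A ≤ t → t < B → f (t + 1) ≤ g t) :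
    ∃ t, A ≤ t ∧ t ≤ B ∧ f t ≤ y ∧ y ≤ g t := by
  revert h1 hstep
  induction B, hAB using Nat.le_induction with
  | base =>
    intro h1 _
    exact ⟨A, le_refl _, le_refl _, h0, h1⟩
  | succ b hAb ih =>
    intro h1 hstep
    by_cases hc : f (b + 1) ≤ y
    · exact ⟨b + 1, by omega, le_refl _, hc, h1⟩
    · have hfg : f (b + 1) ≤ g b := hstep b hAb (Nat.lt_succ_self b)
      have hyg : y ≤ g b := le_trans (le_of_not_ge hc) hfg
      obtain ⟨t, h₁, h₂, h₃, h₄⟩ := ih hyg (fun t ht htb => hstep t ht (by omega))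
      exact ⟨t, h₁, by omega, h₃, h₄⟩

private def Wfun (β h : ℝ) {N : ℕ} (w : Fin N → ℝ) (j : ℕ) : Fin N → ℝ :=
  fun i => if (i : ℕ) < j then w i + (1 - β) * h else w i

lemma stepLemma (β : ℝ) (hβ0 : 0 < β) (hβ2 : β ≤ 1/2) (m' N : ℕ)
    (hcond : 1 - 2*β ≤ ((N:ℝ) - 1) * β * (1-β)^m')
    (y h : ℝ) (hh : 0 < h)
    (w : Fin N → ℝ) (hw1 : ∀ i, 1 - β ≤ w i) (hw2 : ∀ i, w i + h ≤ 1)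
    (hlo : ∑ i, (w i)^(m'+1) ≤ y) (hhi : y ≤ ∑ i, (w i + h)^(m'+1)) :
    ∃ w' : Fin N → ℝ, (∀ i, w' i = w i ∨ w' i = w i + (1-β)*h) ∧
      ∑ i, (w' i)^(m'+1) ≤ y ∧ y ≤ ∑ i, (w' i + β*h)^(m'+1) := by
  have hβ1 : β < 1 := lt_of_le_of_lt hβ2 (by norm_num)
  have h1β0 : (0:ℝ) ≤ 1 - β := by linarith
  have hWlb : ∀ j i, 1 - β ≤ Wfun β h w j i := by
    intro j i
    simp only [Wfun]
    split
    · nlinarith [hw1 i]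
    · exact hw1 i
  have hWub : ∀ j i, Wfun β h w j i + β * h ≤ w i + h := by
    intro j i
    simp only [Wfun]
    split
    · nlinarith
    · nlinarith
  -- bottom and top of config j
  have hf0 : ∑ i, (Wfun β h w 0 i)^(m'+1) ≤ y := by
    have : ∀ i, Wfun β h w 0 i = w i := by intro i; simp [Wfun]
    simpa [this] using hlo
  have hgN : y ≤ ∑ i, (Wfun β h w N i + β * h)^(m'+1) := by
    have : ∀ i : Fin N, Wfun β h w N i + β * h = w i + h := by
      intro i; simp only [Wfun, if_pos i.isLt]; ring
    simpa [this] using hhi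
  have hchain : ∀ t, 0 ≤ t → t < N →
      ∑ i, (Wfun β h w (t+1) i)^(m'+1) ≤ ∑ i, (Wfun β h w t i + β * h)^(m'+1) := by
    intro t _ htN
    set jI : Fin N := ⟨t, htN⟩ with hjI
    have hN1 : 1 ≤ N := by omega
    -- f(t+1) - f t
    have hfdiff : ∑ i, (Wfun β h w (t+1) i)^(m'+1) - ∑ i, (Wfun β h w t i)^(m'+1)
        = (w jI + (1-β)*h)^(m'+1) - (w jI)^(m'+1) := by
      rw [← Finset.sum_sub_distrib]
      rw [Finset.sum_eq_single jI]
      · have h1 : Wfun β h w (t+1) jI = w jI + (1-β)*h := by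
          simp only [Wfun, hjI]; rw [if_pos]; omega
        have h2 : Wfun β h w t jI = w jI := by
          simp only [Wfun, hjI]; rw [if_neg]; omega
        rw [h1, h2]
      · intro i _ hne
        have hiv : (i : ℕ) ≠ t := by
          intro hct; exact hne (Fin.ext hct)
        have hiff : ((i:ℕ) < t + 1) = ((i:ℕ) < t) := by
          simp only [eq_iff_iff]; omega
        simp only [Wfun, hiff, sub_self]
      · intro hmem; exact absurd (Finset.mem_univ jI) hmem
    -- g t - f t termwise
    have hterm : ∀ i : Fin N, ((m':ℝ)+1)*(β*h)*(1-β)^m'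
        ≤ (Wfun β h w t i + β*h)^(m'+1) - (Wfun β h w t i)^(m'+1) := by
      intro i
      have hb0 : 0 ≤ Wfun β h w t i := le_trans h1β0 (hWlb t i)
      have hba : Wfun β h w t i ≤ Wfun β h w t i + β*h := by nlinarith
      have hB := lemB m' hb0 hba
      have he : Wfun β h w t i + β*h - Wfun β h w t i = β*h := by ring
      rw [he] at hB
      have hpow : (1-β)^m' ≤ (Wfun β h w t i)^m' := pow_le_pow_left₀ h1β0 (hWlb t i) m'
      have := mul_le_mul_of_nonneg_left hpow (show (0:ℝ) ≤ ((m':ℝ)+1)*(β*h) by positivity)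
      calc ((m':ℝ)+1)*(β*h)*(1-β)^m' ≤ ((m':ℝ)+1)*(β*h)*(Wfun β h w t i)^m' := by
            nlinarith [this]
        _ ≤ _ := hB
    -- sum over erase
    have hsumge : ((N:ℝ)-1) * (((m':ℝ)+1)*(β*h)*(1-β)^m')
        ≤ ∑ i ∈ Finset.univ.erase jI,
            ((Wfun β h w t i + β*h)^(m'+1) - (Wfun β h w t i)^(m'+1)) := by
      have hcard : (Finset.univ.erase jI).card = N - 1 := by
        rw [Finset.card_erase_of_mem (Finset.mem_univ jI), Finset.card_univ, Fintype.card_fin]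
      have := Finset.card_nsmul_le_sum (Finset.univ.erase jI)
        (fun i => (Wfun β h w t i + β*h)^(m'+1) - (Wfun β h w t i)^(m'+1))
        (((m':ℝ)+1)*(β*h)*(1-β)^m') (fun i _ => hterm i)
      rw [hcard, nsmul_eq_mul] at this
      have hc : ((N - 1 : ℕ) : ℝ) = (N:ℝ) - 1 := by
        rw [Nat.cast_sub hN1]; norm_num
      rwa [hc] at this
    have hgt : ∑ i, (Wfun β h w t i + β*h)^(m'+1) - ∑ i, (Wfun β h w t i)^(m'+1)
        = ((w jI + β*h)^(m'+1) - (w jI)^(m'+1))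
          + ∑ i ∈ Finset.univ.erase jI,
              ((Wfun β h w t i + β*h)^(m'+1) - (Wfun β h w t i)^(m'+1)) := by
      rw [← Finset.sum_sub_distrib]
      rw [← Finset.add_sum_erase _ _ (Finset.mem_univ jI)]
      have h2 : Wfun β h w t jI = w jI := by
        simp only [Wfun, hjI]; rw [if_neg]; omega
      rw [h2]
    -- FB bound
    have hFB : (w jI + (1-β)*h)^(m'+1) - (w jI + β*h)^(m'+1)
        ≤ ((m':ℝ)+1) * ((1-2*β)*h) := by
      have hb0 : (0:ℝ) ≤ w jI + β*h := by nlinarith [hw1 jI]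
      have hba : w jI + β*h ≤ w jI + (1-β)*h := by nlinarith
      have ha1 : w jI + (1-β)*h ≤ 1 := by nlinarith [hw2 jI]
      have := lemA (m'+1) hb0 hba ha1
      have he : (w jI + (1-β)*h) - (w jI + β*h) = (1-2*β)*h := by ring
      rw [he] at this
      calc (w jI + (1-β)*h)^(m'+1) - (w jI + β*h)^(m'+1) ≤ ((m'+1:ℕ):ℝ) * ((1-2*β)*h) := this
        _ = ((m':ℝ)+1) * ((1-2*β)*h) := by push_cast; ring
    -- hcond scaled
    have hscale : ((m':ℝ)+1) * ((1-2*β)*h) ≤ ((N:ℝ)-1) * (((m':ℝ)+1)*(β*h)*(1-β)^m') := by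
      have := mul_le_mul_of_nonneg_left hcond (show (0:ℝ) ≤ ((m':ℝ)+1)*h by positivity)
      nlinarith [this]
    linarith [hfdiff, hgt, hsumge, hFB, hscale]
  obtain ⟨j, _, hjN, hfj, hgj⟩ := chainLemma
    (fun j => ∑ i, (Wfun β h w j i)^(m'+1))
    (fun j => ∑ i, (Wfun β h w j i + β*h)^(m'+1)) 0 N (Nat.zero_le N) y hf0 hgN hchain
  refine ⟨Wfun β h w j, ?_, hfj, hgj⟩
  intro i
  simp only [Wfun]
  split
  · right; rfl
  · left; rfl

/-- invariant for greedy construction; `β := (1-α)/2`. -/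
def InvP (β : ℝ) (m' N : ℕ) (y : ℝ) (n : ℕ) (w : Fin N → ℝ) : Prop :=
  (∀ i, 1 - β ≤ w i ∧ w i + β^(n+1) ≤ 1) ∧
    ∑ i, (w i)^(m'+1) ≤ y ∧ y ≤ ∑ i, (w i + β^(n+1))^(m'+1)

noncomputable def seqW (β : ℝ) (m' N : ℕ) (y : ℝ) : ℕ → Fin N → ℝ
  | 0 => fun _ => 1 - β
  | (n+1) =>
      if hex : ∃ w' : Fin N → ℝ,
          (∀ i, w' i = seqW β m' N y n i ∨
            w' i = seqW β m' N y n i + (1-β)*β^(n+1)) ∧ InvP β m' N y (n+1) w'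
      then hex.choose else seqW β m' N y n

lemma mainLemma (α : ℝ) (hα0 : 0 < α) (hα1 : α < 1) (m' N : ℕ)
    (hcond : α ≤ ((N:ℝ) - 1) * ((1-α)/2) * ((1+α)/2)^m')
    (y : ℝ) (hy1 : (N:ℝ) * ((1+α)/2)^(m'+1) ≤ y) (hy2 : y ≤ N) :
    ∃ c : Fin N → ℝ, (∀ i, c i ∈ centralCantor α) ∧ y = ∑ i, c i ^ (m'+1) := by
  set β : ℝ := (1-α)/2 with hβdef
  have hβ0 : 0 < β := by rw [hβdef]; linarith
  have hβ2 : β ≤ 1/2 := by rw [hβdef]; linarith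
  have hβ1 : β < 1 := by linarith
  have h1β : 1 - β = (1+α)/2 := by rw [hβdef]; ring
  have h1β0 : (0:ℝ) ≤ 1 - β := by linarith
  have hα2β : α = 1 - 2*β := by rw [hβdef]; ring
  have hcond' : 1 - 2*β ≤ ((N:ℝ) - 1) * β * (1-β)^m' := by
    rw [← hα2β, h1β]; exact hcond
  -- the step preserves the invariant
  have hstep : ∀ n (w : Fin N → ℝ), InvP β m' N y n w →
      ∃ w' : Fin N → ℝ, (∀ i, w' i = w i ∨ w' i = w i + (1-β)*β^(n+1)) ∧
        InvP β m' N y (n+1) w' := by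
    intro n w ⟨hwb, hlo, hhi⟩
    have hh : (0:ℝ) < β^(n+1) := pow_pos hβ0 _
    obtain ⟨w', hdig, hlo', hhi'⟩ := stepLemma β hβ0 hβ2 m' N hcond' y (β^(n+1)) hh w
      (fun i => (hwb i).1) (fun i => (hwb i).2) hlo hhi
    have hpow : β * β^(n+1) = β^(n+1+1) := by ring
    refine ⟨w', hdig, ⟨?_, ?_, ?_⟩⟩
    · intro i
      rcases hdig i with h | h <;> rw [h]
      · constructor
        · exact (hwb i).1
        · have : β^(n+1+1) ≤ β^(n+1) :=
            pow_le_pow_of_le_one hβ0.le hβ1.le (by omega)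
          linarith [(hwb i).2]
      · constructor
        · nlinarith [(hwb i).1]
        · have : w i + (1-β)*β^(n+1) + β^(n+1+1) = w i + β^(n+1) := by ring
          rw [this]; exact (hwb i).2
    · exact hlo'
    · calc y ≤ ∑ i, (w' i + β*β^(n+1))^(m'+1) := hhi'
        _ = ∑ i, (w' i + β^(n+1+1))^(m'+1) := by rw [hpow]
  -- the invariant holds along seqW
  have hInv : ∀ n, InvP β m' N y n (seqW β m' N y n) := by
    intro n
    induction n with
    | zero =>
      refine ⟨fun i => ⟨le_refl _, by simp [seqW]⟩, ?_, ?_⟩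
      · calc ∑ i : Fin N, (seqW β m' N y 0 i)^(m'+1)
            = (N:ℝ) * ((1+α)/2)^(m'+1) := by
              simp [seqW, Finset.sum_const, nsmul_eq_mul, h1β]
          _ ≤ y := hy1
      · have hone : ∀ i : Fin N, (seqW β m' N y 0 i + β^(0+1))^(m'+1) = 1 := by
          intro i
          have h1 : seqW β m' N y 0 i + β^(0+1) = 1 := by
            simp only [seqW, pow_one]; ring
          rw [h1, one_pow]
        have hsum1 : ∑ i : Fin N, (seqW β m' N y 0 i + β^(0+1))^(m'+1) = (N:ℝ) := by
          rw [Finset.sum_congr rfl (fun i _ => hone i)]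
          simp
        rw [hsum1]; exact hy2
    | succ n ih =>
      have hex := hstep n (seqW β m' N y n) ih
      rw [seqW, dif_pos hex]
      exact hex.choose_spec.2
  have hdig : ∀ n i, seqW β m' N y (n+1) i = seqW β m' N y n i ∨
      seqW β m' N y (n+1) i = seqW β m' N y n i + (1-β)*β^(n+1) := by
    intro n i
    have hex := hstep n (seqW β m' N y n) (hInv n)
    rw [seqW, dif_pos hex]
    exact hex.choose_spec.1 i
  -- digits (kept opaque via an existential)
  obtain ⟨ε, hε01, hε0, hstepval⟩ :
      ∃ ε : Fin N → ℕ → ℝ, (∀ i n, ε i n = 0 ∨ ε i n = 1) ∧ (∀ i, ε i 0 = 1) ∧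
        ∀ n (i : Fin N), seqW β m' N y (n+1) i
          = seqW β m' N y n i + ε i (n+1) * ((1+α)/2) * ((1-α)/2)^(n+1) := by
    refine ⟨fun i n => Nat.casesOn n (1:ℝ)
      (fun k => if seqW β m' N y (k+1) i = seqW β m' N y k i then 0 else 1),
      ?_, fun i => rfl, ?_⟩
    · intro i n
      cases n with
      | zero => right; rfl
      | succ k =>
        simp only
        split
        · left; rfl
        · right; rfl
    · intro n i
      have hterm : ((1+α)/2) * ((1-α)/2)^(n+1) = (1-β)*β^(n+1) := by
        rw [h1β, hβdef]
      rcases hdig n i with h | h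
      · simp only
        rw [if_pos h, h]; ring
      · have hne : seqW β m' N y (n+1) i ≠ seqW β m' N y n i := by
          rw [h]
          have hpos : (0:ℝ) < (1-β)*β^(n+1) := mul_pos (by linarith) (pow_pos hβ0 _)
          intro hc; nlinarith
        simp only
        rw [if_neg hne, h, one_mul, hterm]
  have hεnn : ∀ i n, 0 ≤ ε i n := by
    intro i n; rcases hε01 i n with h | h <;> rw [h] <;> norm_num
  have hε1 : ∀ i n, ε i n ≤ 1 := by
    intro i n; rcases hε01 i n with h | h <;> rw [h] <;> norm_num
  -- partial sums
  have hpart : ∀ n (i : Fin N),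
      seqW β m' N y n i = ∑ j ∈ Finset.range (n+1), ε i j * ((1+α)/2) * ((1-α)/2)^j := by
    intro n i
    induction n with
    | zero =>
      rw [show (0+1) = 1 from rfl, Finset.sum_range_one, hε0 i]
      rw [show seqW β m' N y 0 i = 1 - β from rfl, h1β]
      ring
    | succ n ih =>
      rw [Finset.sum_range_succ, ← ih, hstepval n i]
  -- summability
  have hgeom : Summable (fun j : ℕ => ((1+α)/2) * ((1-α)/2)^j) :=
    (summable_geometric_of_lt_one (by linarith) (by rw [← hβdef]; exact hβ1)).mul_left _
  have hsum : ∀ i : Fin N, Summable (fun j => ε i j * ((1+α)/2) * ((1-α)/2)^j) := by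
    intro i
    apply Summable.of_nonneg_of_le _ _ hgeom
    · intro j
      have : (0:ℝ) ≤ ((1-α)/2)^j := by positivity
      have := hεnn i j
      positivity
    · intro j
      have h1 : (0:ℝ) ≤ ((1+α)/2) * ((1-α)/2)^j := by positivity
      nlinarith [hε1 i j, h1]
  set c : Fin N → ℝ := fun i => ∑' j, ε i j * ((1+α)/2) * ((1-α)/2)^j with hcdef
  have hcC : ∀ i, c i ∈ centralCantor α := fun i => ⟨ε i, hε01 i, rfl⟩
  -- tail bounds : seqW n i ≤ c i ≤ seqW n i + β^(n+1)
  have htail : ∀ n (i : Fin N), seqW β m' N y n i ≤ c i ∧ c i ≤ seqW β m' N y n i + β^(n+1) := by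
    intro n i
    have hsplit := Summable.sum_add_tsum_nat_add (f := fun j => ε i j * ((1+α)/2) * ((1-α)/2)^j) (n+1) (hsum i)
    have htail0 : 0 ≤ ∑' j, ε i (j + (n+1)) * ((1+α)/2) * ((1-α)/2)^(j + (n+1)) := by
      apply tsum_nonneg
      intro j
      have : (0:ℝ) ≤ ((1-α)/2)^(j+(n+1)) := by positivity
      have := hεnn i (j+(n+1))
      positivity
    have hub : ∑' j, ε i (j + (n+1)) * ((1+α)/2) * ((1-α)/2)^(j + (n+1)) ≤ β^(n+1) := by
      have hle : ∀ j, ε i (j + (n+1)) * ((1+α)/2) * ((1-α)/2)^(j + (n+1))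
          ≤ ((1-β)*β^(n+1)) * β^j := by
        intro j
        have he : ((1+α)/2) * ((1-α)/2)^(j + (n+1)) = ((1-β)*β^(n+1)) * β^j := by
          rw [h1β, ← hβdef, pow_add]; ring
        have h1 : (0:ℝ) ≤ ((1-β)*β^(n+1)) * β^j := by positivity
        calc ε i (j + (n+1)) * ((1+α)/2) * ((1-α)/2)^(j + (n+1))
            = ε i (j + (n+1)) * (((1-β)*β^(n+1)) * β^j) := by rw [mul_assoc, he]
          _ ≤ 1 * (((1-β)*β^(n+1)) * β^j) := by
              exact mul_le_mul_of_nonneg_right (hε1 i (j+(n+1))) h1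
          _ = ((1-β)*β^(n+1)) * β^j := by ring
      have hsum2 : Summable (fun j : ℕ => ((1-β)*β^(n+1)) * β^j) :=
        (summable_geometric_of_lt_one hβ0.le hβ1).mul_left _
      have hsum1 : Summable (fun j => ε i (j + (n+1)) * ((1+α)/2) * ((1-α)/2)^(j + (n+1))) := by
        apply Summable.of_nonneg_of_le _ hle hsum2
        intro j
        have h2 : (0:ℝ) ≤ ((1-α)/2)^(j+(n+1)) := by positivity
        have h3 := hεnn i (j+(n+1))
        positivity
      calc ∑' j, ε i (j + (n+1)) * ((1+α)/2) * ((1-α)/2)^(j + (n+1))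
          ≤ ∑' j : ℕ, ((1-β)*β^(n+1)) * β^j := Summable.tsum_le_tsum hle hsum1 hsum2
        _ = ((1-β)*β^(n+1)) * (1-β)⁻¹ := by
            rw [tsum_mul_left, tsum_geometric_of_lt_one hβ0.le hβ1]
        _ = β^(n+1) := by
            have h1βne : (1-β) ≠ 0 := by linarith
            rw [mul_comm (1-β) (β^(n+1)), mul_assoc, mul_inv_cancel₀ h1βne, mul_one]
    have hpartn := hpart n i
    have hci : c i = ∑' j, ε i j * ((1+α)/2) * ((1-α)/2)^j := rfl
    constructor
    · rw [hpartn, hci, ← hsplit]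
      linarith
    · rw [hpartn, hci, ← hsplit]
      linarith
  -- final squeeze
  have hcnn : ∀ i, (0:ℝ) ≤ c i := by
    intro i
    have := (htail 0 i).1
    have hW := ((hInv 0).1 i).1
    linarith
  have hbound : ∀ n, |y - ∑ i, c i ^ (m'+1)| ≤ (N:ℝ) * ((m':ℝ)+1) * β^(n+1) := by
    intro n
    obtain ⟨hwb, hlo, hhi⟩ := hInv n
    have hlow : ∑ i, (seqW β m' N y n i)^(m'+1) ≤ ∑ i, c i ^ (m'+1) := by
      apply Finset.sum_le_sum
      intro i _
      exact pow_le_pow_left₀ (le_trans h1β0 (hwb i).1) (htail n i).1 _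
    have hhigh : ∑ i, c i ^ (m'+1) ≤ ∑ i, (seqW β m' N y n i + β^(n+1))^(m'+1) := by
      apply Finset.sum_le_sum
      intro i _
      exact pow_le_pow_left₀ (hcnn i) (htail n i).2 _
    have hdiff : ∑ i, (seqW β m' N y n i + β^(n+1))^(m'+1) - ∑ i, (seqW β m' N y n i)^(m'+1)
        ≤ (N:ℝ) * ((m':ℝ)+1) * β^(n+1) := by
      rw [← Finset.sum_sub_distrib]
      calc ∑ i, ((seqW β m' N y n i + β^(n+1))^(m'+1) - (seqW β m' N y n i)^(m'+1))
          ≤ ∑ _i : Fin N, ((m'+1:ℕ):ℝ) * β^(n+1) := by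
            apply Finset.sum_le_sum
            intro i _
            have h1 := lemA (m'+1) (le_trans h1β0 (hwb i).1)
              (by nlinarith [pow_pos hβ0 (n+1)] :
                seqW β m' N y n i ≤ seqW β m' N y n i + β^(n+1)) ((hwb i).2)
            have he : seqW β m' N y n i + β^(n+1) - seqW β m' N y n i = β^(n+1) := by ring
            rw [he] at h1
            exact h1
        _ = (N:ℝ) * ((m':ℝ)+1) * β^(n+1) := by
            rw [Finset.sum_const, Finset.card_univ, Fintype.card_fin, nsmul_eq_mul]
            push_cast; ring
    rw [abs_le]
    constructor <;> linarith
  have hlim : Filter.Tendsto (fun n : ℕ => (N:ℝ) * ((m':ℝ)+1) * β^(n+1))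
      Filter.atTop (nhds 0) := by
    have T0 : Filter.Tendsto (fun n : ℕ => β^n) Filter.atTop (nhds 0) :=
      tendsto_pow_atTop_nhds_zero_of_lt_one hβ0.le hβ1
    have T1 : Filter.Tendsto (fun n : ℕ => β^(n+1)) Filter.atTop (nhds 0) :=
      T0.comp (Filter.tendsto_add_atTop_nat 1)
    have := T1.const_mul ((N:ℝ) * ((m':ℝ)+1))
    simpa using this
  have heq : y = ∑ i, c i ^ (m'+1) := by
    by_contra hne
    have habs : 0 < |y - ∑ i, c i ^ (m'+1)| := by
      rw [abs_pos, sub_ne_zero]; exact hne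
    obtain ⟨n, hn⟩ := (hlim.eventually (gt_mem_nhds habs)).exists
    exact absurd (hbound n) (not_le.2 hn)
  exact ⟨c, hcC, heq⟩

lemma half_mem (α : ℝ) : (1+α)/2 ∈ centralCantor α := by
  refine ⟨fun n => if n = 0 then 1 else 0, ?_, ?_⟩
  · intro n
    by_cases h : n = 0
    · right; simp [h]
    · left; simp [h]
  · rw [tsum_eq_single 0]
    · simp
    · intro b hb
      simp [hb]


/-- If `2 + ((1+α)/2)^m ≥ 3 ((1+α)/2)^m ((3−α)/2)^m`, then the union of the
intervals `I^{(t)}`, `t = 1, …, r_{α,m}/2`, is a single closed interval of length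
`2 + (r_{α,m}/2 − 3)((1+α)/2)^m((3−α)/2)^m − (r_{α,m}/2 − 1)((1+α)/2)^m`
contained in `Γ_{α,m}`. -/
theorem union_is_single_interval (α : ℝ) (hα : α ∈ Set.Ioo (0 : ℝ) 1) (m : ℕ) (hm : 0 < m)
    (hineq : 2 + ((1 + α) / 2) ^ m ≥ 3 * ((1 + α) / 2) ^ m * ((3 - α) / 2) ^ m) :
    ∃ a b : ℝ,
      b - a = 2 + ((rCount α m : ℝ) / 2 - 3) * (((1 + α) / 2) ^ m * ((3 - α) / 2) ^ m)
              - ((rCount α m : ℝ) / 2 - 1) * ((1 + α) / 2) ^ m ∧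
      (⋃ t ∈ Finset.Icc 1 (rCount α m / 2), Set.Icc (leftEP α m t) (rightEP α m t))
        = Set.Icc a b ∧
      Set.Icc a b ⊆ Gam α m := by
  obtain ⟨hα0, hα1⟩ := hα
  obtain ⟨m', rfl⟩ : ∃ m', m = m' + 1 := ⟨m - 1, by omega⟩
  set m := m' + 1 with hmdef
  -- basic positivity
  have hαpos : (0:ℝ) < 1 + α := by linarith
  have hP0 : (0:ℝ) < ((1+α)/2)^m := by positivity
  have hQ1 : (1:ℝ) ≤ ((3-α)/2)^m := one_le_pow₀ (by linarith)
  have hPS : ((1+α)/2)^m ≤ ((1+α)/2)^m * ((3-α)/2)^m :=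
    le_mul_of_one_le_right hP0.le hQ1
  have hP1 : ((1+α)/2)^m ≤ 1 := pow_le_one₀ (by linarith) (by linarith)
  have hS1 : ((1+α)/2)^m * ((3-α)/2)^m ≤ 1 := by
    rw [← mul_pow]
    apply pow_le_one₀ (by nlinarith) (by nlinarith)
  -- arithmetic of counts
  set s := sCount α m with hsdef
  set k := kCount α m with hkdef
  set R := s + k with hRdef
  have hr : rCount α m = 2 * R := by rw [rCount, hRdef]; ring
  have hR2 : rCount α m / 2 = R := by omega
  have hm1 : m - 1 = m' := by omega
  have hbase1 : (1:ℝ) ≤ 2/(1+α) := (one_le_div hαpos).2 (by linarith)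
  have hs_ceil : (2/(1+α))^m' ≤ (s:ℝ) := by
    rw [hsdef, sCount, hm1]; exact Nat.le_ceil _
  have hs1 : 1 ≤ s := by
    rw [hsdef, sCount, hm1]
    rw [Nat.one_le_ceil_iff]
    positivity
  have hR1 : 1 ≤ R := by omega
  have hX0 : (0:ℝ) < ((1+α)/2)^m' := by positivity
  have hsP : 1 ≤ (s:ℝ) * ((1+α)/2)^m' := by
    have h2 : (2/(1+α))^m' * ((1+α)/2)^m' ≤ (s:ℝ) * ((1+α)/2)^m' :=
      mul_le_mul_of_nonneg_right hs_ceil hX0.le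
    have h3 : (2/(1+α))^m' * ((1+α)/2)^m' = 1 := by
      rw [← mul_pow]
      have : (2/(1+α)) * ((1+α)/2) = 1 := by field_simp
      rw [this, one_pow]
    linarith [h2, h3.symm.le]
  have hRcond : α ≤ (R:ℝ) * ((1-α)/2) * ((1+α)/2)^m' := by
    have h1 : (1-α)/2 ≤ (s:ℝ) * ((1-α)/2) * ((1+α)/2)^m' := by
      nlinarith [hsP, hX0]
    by_cases hα3 : 1/3 < α
    · have hk_ceil : ((3*α-1)/2) / (((1+α)/2)^m' * ((1-α^2)/4)) ≤ (k:ℝ) := by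
        rw [hkdef, kCount, if_pos hα3, hm1]; exact Nat.le_ceil _
      have hD0 : (0:ℝ) < ((1+α)/2)^m' * ((1-α^2)/4) := by
        have : (0:ℝ) < 1 - α^2 := by nlinarith
        positivity
      have hkD : (3*α-1)/2 ≤ (k:ℝ) * (((1+α)/2)^m' * ((1-α^2)/4)) :=
        (div_le_iff₀ hD0).1 hk_ceil
      have hT0 : (0:ℝ) ≤ (k:ℝ) * ((1-α)/2) * ((1+α)/2)^m' :=
        mul_nonneg (mul_nonneg (Nat.cast_nonneg k) (by linarith)) hX0.le
      have hT : (3*α-1)/2 ≤ ((k:ℝ) * ((1-α)/2) * ((1+α)/2)^m') * ((1+α)/2) := by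
        nlinarith [hkD]
      have hTge : (3*α-1)/2 ≤ (k:ℝ) * ((1-α)/2) * ((1+α)/2)^m' := by
        nlinarith [hT, hT0]
      have : ((R:ℝ)) = (s:ℝ) + (k:ℝ) := by rw [hRdef]; push_cast; ring
      rw [this]
      nlinarith [h1, hTge]
    · have hk0 : k = 0 := by rw [hkdef, kCount, if_neg hα3]
      have : ((R:ℝ)) = (s:ℝ) := by rw [hRdef, hk0]; push_cast; ring
      rw [this]
      push_neg at hα3
      nlinarith [h1]
  -- per-interval containment
  have subGam : ∀ t : ℕ, 1 ≤ t → t ≤ R →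
      Set.Icc (leftEP α m t) (rightEP α m t) ⊆ Gam α m := by
    intro t ht1 htR x hx
    have hrr : ((rCount α m : ℕ):ℝ)/2 = (R:ℝ) := by rw [hr]; push_cast; ring
    have hxl : ((R:ℝ) - t) * ((1+α)/2)^m + ((t:ℝ)+1) * (((1+α)/2)^m * ((3-α)/2)^m)
        + ((R:ℝ) - 1) ≤ x := by
      have := hx.1
      rw [leftEP, hrr] at this
      exact this
    have hxu : x ≤ ((R:ℝ) - t) * ((1+α)/2)^m + ((t:ℝ)-1) * (((1+α)/2)^m * ((3-α)/2)^m)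
        + ((R:ℝ) + 1) := by
      have := hx.2
      rw [rightEP, hrr] at this
      exact this
    set y := x - ((R:ℝ) - t) * ((1+α)/2)^m with hydef
    have ht1' : (1:ℝ) ≤ (t:ℝ) := by exact_mod_cast ht1
    have hR1' : (1:ℝ) ≤ (R:ℝ) := by exact_mod_cast hR1
    have htR' : (t:ℝ) ≤ (R:ℝ) := by exact_mod_cast htR
    have hcondN : α ≤ (((R + t : ℕ):ℝ) - 1) * ((1-α)/2) * ((1+α)/2)^m' := by
      push_cast
      have hβX : (0:ℝ) ≤ ((1-α)/2) * ((1+α)/2)^m' :=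
        mul_nonneg (by linarith) hX0.le
      nlinarith [hRcond, hβX]
    have hy1 : ((R + t : ℕ):ℝ) * ((1+α)/2)^(m'+1) ≤ y := by
      push_cast
      have e1 : (0:ℝ) ≤ ((t:ℝ)+1) * (((1+α)/2)^m * ((3-α)/2)^m - ((1+α)/2)^m) :=
        mul_nonneg (by linarith) (by linarith [hPS])
      have e2 : (0:ℝ) ≤ ((R:ℝ)-1) * (1 - ((1+α)/2)^m) :=
        mul_nonneg (by linarith) (by linarith [hP1])
      rw [hydef, hmdef]
      nlinarith [hxl]
    have hy2 : y ≤ ((R + t : ℕ):ℝ) := by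
      push_cast
      have e1 : (0:ℝ) ≤ ((t:ℝ)-1) * (1 - ((1+α)/2)^m * ((3-α)/2)^m) :=
        mul_nonneg (by linarith) (by linarith [hS1])
      rw [hydef]
      nlinarith [hxu]
    obtain ⟨cc, hccC, hccsum⟩ := mainLemma α hα0 hα1 m' (R + t) hcondN y hy1 hy2
    have hsplitnat : rCount α m = (R - t) + (R + t) := by omega
    refine ⟨fun i => Fin.append (fun _ : Fin (R-t) => (1+α)/2) cc (Fin.cast hsplitnat i),
      ?_, ?_⟩
    · intro i
      have hall : ∀ j : Fin ((R-t)+(R+t)),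
          Fin.append (fun _ : Fin (R-t) => (1+α)/2) cc j ∈ centralCantor α := by
        intro j
        refine Fin.addCases (fun p => ?_) (fun p => ?_) j
        · rw [Fin.append_left]; exact half_mem α
        · rw [Fin.append_right]; exact hccC p
      exact hall _
    · have hsum : ∑ i : Fin (rCount α m),
          (Fin.append (fun _ : Fin (R-t) => (1+α)/2) cc (Fin.cast hsplitnat i))^m
          = ∑ j : Fin ((R-t)+(R+t)),
            (Fin.append (fun _ : Fin (R-t) => (1+α)/2) cc j)^m :=
        Fintype.sum_equiv (finCongr hsplitnat) _ _ (fun i => rfl)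
      rw [hsum, Fin.sum_univ_add]
      simp only [Fin.append_left, Fin.append_right]
      rw [Finset.sum_const, Finset.card_univ, Fintype.card_fin, nsmul_eq_mul]
      rw [hmdef, ← hccsum]
      have hcastRT : ((R - t : ℕ):ℝ) = (R:ℝ) - (t:ℝ) := by
        rw [Nat.cast_sub htR]
      rw [hcastRT, hydef, hmdef]
      ring
  -- now the three goals
  refine ⟨leftEP α m 1, rightEP α m (rCount α m / 2), ?_, ?_, ?_⟩
  · rw [leftEP, rightEP, hR2, hr]
    push_cast
    ring
  · have hunion : ∀ x : ℝ, (x ∈ ⋃ t ∈ Finset.Icc 1 (rCount α m / 2),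
        Set.Icc (leftEP α m t) (rightEP α m t)) ↔
        x ∈ Set.Icc (leftEP α m 1) (rightEP α m (rCount α m / 2)) := by
      intro x
      simp only [Set.mem_iUnion, Finset.mem_Icc, exists_prop, hR2]
      constructor
      · rintro ⟨t, ⟨ht1, htR⟩, hx⟩
        have ht1' : (1:ℝ) ≤ (t:ℝ) := by exact_mod_cast ht1
        have htR' : (t:ℝ) ≤ (R:ℝ) := by exact_mod_cast htR
        have hrr : ((rCount α m : ℕ):ℝ)/2 = (R:ℝ) := by rw [hr]; push_cast; ring
        constructor
        · have h1 : leftEP α m 1 ≤ leftEP α m t := by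
            rw [leftEP, leftEP, hrr]
            push_cast
            nlinarith [mul_nonneg (by linarith : (0:ℝ) ≤ (t:ℝ) - 1)
              (by linarith [hPS] : (0:ℝ) ≤ ((1+α)/2)^m * ((3-α)/2)^m - ((1+α)/2)^m)]
          exact le_trans h1 hx.1
        · have h2 : rightEP α m t ≤ rightEP α m R := by
            rw [rightEP, rightEP, hrr]
            push_cast
            nlinarith [mul_nonneg (by linarith : (0:ℝ) ≤ (R:ℝ) - (t:ℝ))
              (by linarith [hPS] : (0:ℝ) ≤ ((1+α)/2)^m * ((3-α)/2)^m - ((1+α)/2)^m)]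
          exact le_trans hx.2 h2
      · intro hx
        have hrr : ((rCount α m : ℕ):ℝ)/2 = (R:ℝ) := by rw [hr]; push_cast; ring
        have hchain : ∀ u, 1 ≤ u → u < R →
            leftEP α m (u+1) ≤ rightEP α m u := by
          intro u hu1 huR
          rw [leftEP, rightEP]
          push_cast
          nlinarith [hineq]
        obtain ⟨t, ht1, htR, hlx, hxr⟩ := chainLemma (fun t => leftEP α m t)
          (fun t => rightEP α m t) 1 R hR1 x hx.1 hx.2 hchain
        exact ⟨t, ⟨ht1, htR⟩, hlx, hxr⟩
    ext x
    exact hunion x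
  · intro x hx
    rw [hR2] at hx
    have hchain : ∀ u, 1 ≤ u → u < R →
        leftEP α m (u+1) ≤ rightEP α m u := by
      intro u hu1 huR
      rw [leftEP, rightEP]
      push_cast
      nlinarith [hineq]
    obtain ⟨t, ht1, htR, hlx, hxr⟩ := chainLemma (fun t => leftEP α m t)
      (fun t => rightEP α m t) 1 R hR1 x hx.1 hx.2 hchain
    exact subGam t ht1 htR ⟨hlx, hxr⟩
end

section
/- For every real α with 0 < α < 1 and every positive integer m, one has 1 + ((3+α²)/4)^m ≥ 2·((1+α)/2)^m. -/
/-- For every `α ∈ (0,1)` and every positive integer `m`,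
`1 + ((3+α²)/4)^m ≥ 2 ((1+α)/2)^m`. -/
theorem one_add_pow_ge (α : ℝ) (hα : α ∈ Set.Ioo (0 : ℝ) 1) (m : ℕ) (hm : 0 < m) :
    1 + ((3 + α ^ 2) / 4) ^ m ≥ 2 * ((1 + α) / 2) ^ m := by
  obtain ⟨h0, h1⟩ := hα
  set x := ((1 + α) / 2) ^ m with hx
  have hxnn : (0:ℝ) ≤ (1 + α) / 2 := by linarith
  have h2x : 2 * x ≤ 1 + x ^ 2 := by nlinarith [sq_nonneg (x - 1)]
  have hsq : ((1 + α) / 2) ^ 2 ≤ (3 + α ^ 2) / 4 := by nlinarith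
  have hx2 : x ^ 2 ≤ ((3 + α ^ 2) / 4) ^ m := by
    rw [hx, ← pow_mul, mul_comm, pow_mul]
    exact pow_le_pow_left₀ (by positivity) hsq m
  linarith
end

section
/- Let m be a positive integer, and let α_1 ≥ α_2 ≥ ⋯ ≥ α_n and β_1 ≥ β_2 ≥ ⋯ ≥ β_p be reals in (0,1) with α_1 = β_1. Suppose n = n_1 + n_2 and p = r_1 + r_2 for positive integers n_1, n_2, r_1, r_2 satisfying: Σ_{j=1}^{r_1} ((1+β_j)/2)^{m−1}·((1−β_j)/2)² > (3β_1 − 1)/(1+β_1); Σ_{j=r_1+1}^{r_1+r_2} ((1+β_j)/2)^{m−1}·((1−β_j)/2) > 1; Σ_{j=1}^{n_1} ((1+α_j)/2)^{m−1}·((1−α_j)/2)² > (3α_1 − 1)/(1+α_1); and Σ_{j=n_1+1}^{n_1+n_2} ((1+α_j)/2)^{m−1}·((1−α_j)/2) > 1. Then the closed interval [ Σ_{i=2}^{n} ((1+α_i)/2)^m + p − 1 + 2·((1+β_1)/2)^m , Σ_{i=2}^{n} ((1+α_i)/2)^m + p + 1 ] is contained in the set Γ = { Σ_{i=1}^{n}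 c_i^m + Σ_{i=1}^{p} d_i^m : c_i ∈ C_{α_i}, d_i ∈ C_{β_i} }. -/
open scoped BigOperators

namespace CantorGreedy

open Finset

/-! ### Elementary power inequalities -/

lemma pow_sub_pow_le (m : ℕ) {u v : ℝ} (hu : 0 ≤ u) (huv : u ≤ v) (hv : v ≤ 1) :
    v ^ m - u ^ m ≤ m * (v - u) := by
  induction m with
  | zero => simp
  | succ k ih =>
    have hv0 : 0 ≤ v := le_trans hu huv
    have hnn : 0 ≤ v ^ k - u ^ k := sub_nonneg.2 (pow_le_pow_left₀ hu huv k)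
    have huk : u ^ k ≤ 1 := pow_le_one₀ hu (le_trans huv hv)
    have hvk : v ^ k - u ^ k ≤ k * (v - u) := ih
    have h1 : v ^ (k+1) - u ^ (k+1) = v * (v ^ k - u ^ k) + (v - u) * u ^ k := by ring
    have h2 : v * (v ^ k - u ^ k) ≤ v ^ k - u ^ k := by nlinarith
    have h3 : (v - u) * u ^ k ≤ v - u := by nlinarith [sub_nonneg.2 huv]
    push_cast
    nlinarith

lemma le_add_pow (k : ℕ) {s L : ℝ} (hs : 0 ≤ s) (hL : 0 ≤ L) :
    s ^ (k+1) + (k+1) * (s ^ k * L) ≤ (s + L) ^ (k+1) := by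
  induction k with
  | zero => simp
  | succ k ih =>
    have hsk : (0:ℝ) ≤ s ^ k := pow_nonneg hs k
    have h1 : (s + L) ^ (k+1+1) = (s + L) * (s + L) ^ (k+1) := by ring
    have h2 : (s + L) * (s ^ (k+1) + ((k:ℝ)+1) * (s ^ k * L)) ≤ (s + L) * (s + L) ^ (k+1) := by
      apply mul_le_mul_of_nonneg_left _ (by linarith)
      push_cast at ih ⊢; exact ih
    have h6 : (s + L) * (s ^ (k+1) + ((k:ℝ)+1) * (s ^ k * L))
        = s ^ (k+1+1) + ((k:ℝ)+1+1) * (s ^ (k+1) * L) + ((k:ℝ)+1) * (s ^ k * (L*L)) := by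
      ring
    have h7 : (0:ℝ) ≤ ((k:ℝ)+1) * (s ^ k * (L*L)) := by positivity
    push_cast
    linarith

/-! ### The greedy construction -/

section Greedy

variable {ι : Type} [Fintype ι] [DecidableEq ι] [Nonempty ι]

/-- State of the construction: for each coordinate, the number of digits fixed so far
and the digits themselves. -/
structure St (ι : Type) where
  K : ι → ℕ
  E : ι → ℕ → Bool

variable (α : ι → ℝ)

/-- `(1+α)/2`. -/
noncomputable def cw (i : ι) : ℝ := (1 + α i) / 2
/-- `(1-α)/2`. -/
noncomputable def cl (i : ι) : ℝ := (1 - α i) / 2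

/-- Lower endpoint of the current interval of coordinate `i`. -/
noncomputable def sVal (σ : St ι) (i : ι) : ℝ :=
  ∑ k ∈ range (σ.K i), (if σ.E i k then (1:ℝ) else 0) * cw α i * cl α i ^ k

/-- Length of the current interval of coordinate `i`. -/
noncomputable def LVal (σ : St ι) (i : ι) : ℝ := cl α i ^ σ.K i

lemma exists_imax (σ : St ι) : ∃ i : ι, ∀ j, LVal α σ j ≤ LVal α σ i := by
  obtain ⟨i, -, h⟩ := Finset.exists_max_image Finset.univ (LVal α σ)
    ⟨Classical.arbitrary ι, mem_univ _⟩
  exact ⟨i, fun j => h j (mem_univ _)⟩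

/-- A coordinate with maximal current interval length. -/
noncomputable def imax (σ : St ι) : ι := Classical.choose (exists_imax α σ)

lemma imax_spec (σ : St ι) : ∀ j, LVal α σ j ≤ LVal α σ (imax α σ) :=
  Classical.choose_spec (exists_imax α σ)

variable (M : ℕ)

noncomputable def lowB (σ : St ι) : ℝ := ∑ i, sVal α σ i ^ (M+1)
noncomputable def uppB (σ : St ι) : ℝ := ∑ i, (sVal α σ i + LVal α σ i) ^ (M+1)

/-- Upper bound obtainable if the maximal coordinate takes digit `false`. -/
noncomputable def U0 (σ : St ι) : ℝ :=
  uppB α M σ - (sVal α σ (imax α σ) + LVal α σ (imax α σ)) ^ (M+1)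
    + (sVal α σ (imax α σ) + cl α (imax α σ) * LVal α σ (imax α σ)) ^ (M+1)

open Classical in
/-- One greedy refinement step towards target `T`. -/
noncomputable def step (T : ℝ) (σ : St ι) : St ι :=
  { K := Function.update σ.K (imax α σ) (σ.K (imax α σ) + 1)
    E := Function.update σ.E (imax α σ)
      (Function.update (σ.E (imax α σ)) (σ.K (imax α σ))
        (if T ≤ U0 α M σ then false else true)) }

/-- Initial state: first digit of every coordinate is `1`. -/
def init : St ι := ⟨fun _ => 1, fun _ _ => true⟩

noncomputable def evol (T : ℝ) : ℕ → St ι := fun t => (step α M T)^[t] init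

variable {α M}

lemma step_K_ne (T : ℝ) (σ : St ι) {j : ι} (hj : j ≠ imax α σ) :
    (step α M T σ).K j = σ.K j := Function.update_of_ne hj _ _

lemma step_E_ne (T : ℝ) (σ : St ι) {j : ι} (hj : j ≠ imax α σ) :
    (step α M T σ).E j = σ.E j := Function.update_of_ne hj _ _

lemma step_K_eq (T : ℝ) (σ : St ι) :
    (step α M T σ).K (imax α σ) = σ.K (imax α σ) + 1 := Function.update_self _ _ _

lemma step_sVal_ne (T : ℝ) (σ : St ι) {j : ι} (hj : j ≠ imax α σ) :
    sVal α (step α M T σ) j = sVal α σ j := by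
  unfold sVal
  rw [step_K_ne T σ hj, step_E_ne T σ hj]

lemma step_LVal_ne (T : ℝ) (σ : St ι) {j : ι} (hj : j ≠ imax α σ) :
    LVal α (step α M T σ) j = LVal α σ j := by
  unfold LVal; rw [step_K_ne T σ hj]

lemma step_LVal_eq (T : ℝ) (σ : St ι) :
    LVal α (step α M T σ) (imax α σ) = cl α (imax α σ) * LVal α σ (imax α σ) := by
  unfold LVal; rw [step_K_eq]; rw [pow_succ]; ring

lemma step_sVal_eq (T : ℝ) (σ : St ι) :
    sVal α (step α M T σ) (imax α σ) = sVal α σ (imax α σ) +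
      (if T ≤ U0 α M σ then 0 else cw α (imax α σ) * LVal α σ (imax α σ)) := by
  classical
  set i := imax α σ
  have hE : (step α M T σ).E i =
      Function.update (σ.E i) (σ.K i) (if T ≤ U0 α M σ then false else true) :=
    Function.update_self _ _ _
  unfold sVal
  rw [step_K_eq, hE, Finset.sum_range_succ]
  congr 1
  · apply Finset.sum_congr rfl
    intro k hk
    rw [Function.update_of_ne (Nat.ne_of_lt (Finset.mem_range.1 hk)) _ _]
  · rw [Function.update_self]
    by_cases h : T ≤ U0 α M σ <;> simp [h, LVal] <;> exact Or.inl rfl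


variable (α) (M) in
/-- Structural invariants of the construction. -/
def Inv (σ : St ι) : Prop :=
  (∀ i, cw α i ≤ sVal α σ i) ∧ (∀ i, sVal α σ i + LVal α σ i ≤ 1) ∧
  (∀ i j, cl α i * LVal α σ j ≤ LVal α σ i)

section WithHyp

variable (hα : ∀ i, α i ∈ Set.Ioo (0:ℝ) 1)

include hα

lemma cl_pos (i : ι) : 0 < cl α i := by
  have := (hα i).2; unfold cl; linarith
lemma cl_lt_one (i : ι) : cl α i < 1 := by
  have := (hα i).1; unfold cl; linarith
lemma cw_pos (i : ι) : 0 < cw α i := by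
  have := (hα i).1; unfold cw; linarith
lemma cw_le_one (i : ι) : cw α i ≤ 1 := by
  have := (hα i).2; unfold cw; linarith
lemma cl_le_cw (i : ι) : cl α i ≤ cw α i := by
  have := (hα i).1; unfold cw cl; linarith
lemma LVal_pos (σ : St ι) (i : ι) : 0 < LVal α σ i :=
  pow_pos (cl_pos hα i) _

omit hα in
lemma cw_add_cl (i : ι) : cw α i + cl α i = 1 := by unfold cw cl; ring

lemma inv_init : Inv α (init (ι := ι)) := by
  have hs : ∀ i, sVal α (init (ι := ι)) i = cw α i := by
    intro i; unfold sVal init; simp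
  have hL : ∀ i, LVal α (init (ι := ι)) i = cl α i := by
    intro i; unfold LVal init; simp
  refine ⟨fun i => by rw [hs], fun i => ?_, fun i j => ?_⟩
  · rw [hs, hL]
    have : cw α i + cl α i = 1 := cw_add_cl _
    linarith
  · rw [hL, hL]
    calc cl α i * cl α j ≤ cl α i * 1 :=
          mul_le_mul_of_nonneg_left (cl_lt_one hα j).le (cl_pos hα i).le
      _ = cl α i := mul_one _

lemma inv_step (T : ℝ) (σ : St ι) (h : Inv α σ) : Inv α (step α M T σ) := by
  obtain ⟨h1, h2, h3⟩ := h
  have hnn : (0:ℝ) ≤ (if T ≤ U0 α M σ then 0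
      else cw α (imax α σ) * LVal α σ (imax α σ)) := by
    split
    · exact le_rfl
    · exact mul_nonneg (cw_pos hα _).le (LVal_pos hα σ _).le
  have hclL : cl α (imax α σ) * LVal α σ (imax α σ) ≤ LVal α σ (imax α σ) := by
    nlinarith [LVal_pos hα σ (imax α σ), cl_lt_one hα (imax α σ), cl_pos hα (imax α σ)]
  refine ⟨fun i => ?_, fun i => ?_, fun i j => ?_⟩
  · by_cases hi : i = imax α σ
    · subst hi; rw [step_sVal_eq]
      have := h1 (imax α σ); linarith
    · rw [step_sVal_ne T σ hi]; exact h1 i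
  · by_cases hi : i = imax α σ
    · subst hi
      rw [step_sVal_eq, step_LVal_eq]
      have hub := h2 (imax α σ)
      have hsum : cw α (imax α σ) + cl α (imax α σ) = 1 := cw_add_cl _
      split
      · linarith
      · nlinarith [LVal_pos hα σ (imax α σ)]
    · rw [step_sVal_ne T σ hi, step_LVal_ne T σ hi]; exact h2 i
  · by_cases hi : i = imax α σ <;> by_cases hj : j = imax α σ
    · subst hi; subst hj
      rw [step_LVal_eq]
      have := LVal_pos hα σ (imax α σ)
      nlinarith [cl_pos hα (imax α σ), cl_lt_one hα (imax α σ)]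
    · subst hi
      rw [step_LVal_eq, step_LVal_ne T σ hj]
      exact mul_le_mul_of_nonneg_left (imax_spec α σ j) (cl_pos hα _).le
    · subst hj
      rw [step_LVal_ne T σ hi, step_LVal_eq]
      calc cl α i * (cl α (imax α σ) * LVal α σ (imax α σ))
          ≤ cl α i * LVal α σ (imax α σ) := by
            nlinarith [cl_pos hα i, LVal_pos hα σ (imax α σ),
              cl_lt_one hα (imax α σ), cl_pos hα (imax α σ)]
        _ ≤ LVal α σ i := h3 i (imax α σ)
    · rw [step_LVal_ne T σ hi, step_LVal_ne T σ hj]; exact h3 i j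

lemma gap_le_slack (σ : St ι) (h : Inv α σ)
    (G : Finset ι) (hiG : imax α σ ∉ G)
    (hG : 1 ≤ ∑ j ∈ G, cw α j ^ M * cl α j) :
    (sVal α σ (imax α σ) + cw α (imax α σ) * LVal α σ (imax α σ)) ^ (M+1)
      - (sVal α σ (imax α σ) + cl α (imax α σ) * LVal α σ (imax α σ)) ^ (M+1)
    ≤ ∑ j ∈ Finset.univ.erase (imax α σ),
        ((sVal α σ j + LVal α σ j) ^ (M+1) - sVal α σ j ^ (M+1)) := by
  obtain ⟨h1, h2, h3⟩ := h
  have hL : (0:ℝ) ≤ LVal α σ (imax α σ) := (LVal_pos hα σ (imax α σ)).le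
  have hs0 : (0:ℝ) ≤ sVal α σ (imax α σ) := le_trans (cw_pos hα _).le (h1 _)
  have key1 : (sVal α σ (imax α σ) + cw α (imax α σ) * LVal α σ (imax α σ)) ^ (M+1)
      - (sVal α σ (imax α σ) + cl α (imax α σ) * LVal α σ (imax α σ)) ^ (M+1)
      ≤ ((M:ℝ)+1) * LVal α σ (imax α σ) := by
    have hu : (0:ℝ) ≤ sVal α σ (imax α σ) + cl α (imax α σ) * LVal α σ (imax α σ) :=
      add_nonneg hs0 (mul_nonneg (cl_pos hα _).le hL)
    have huv : sVal α σ (imax α σ) + cl α (imax α σ) * LVal α σ (imax α σ)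
        ≤ sVal α σ (imax α σ) + cw α (imax α σ) * LVal α σ (imax α σ) := by
      nlinarith [cl_le_cw hα (imax α σ)]
    have hv : sVal α σ (imax α σ) + cw α (imax α σ) * LVal α σ (imax α σ) ≤ 1 := by
      have := h2 (imax α σ)
      nlinarith [cw_le_one hα (imax α σ)]
    have hps := pow_sub_pow_le (M+1) hu huv hv
    have hle1 : (sVal α σ (imax α σ) + cw α (imax α σ) * LVal α σ (imax α σ))
        - (sVal α σ (imax α σ) + cl α (imax α σ) * LVal α σ (imax α σ))
        ≤ LVal α σ (imax α σ) := by
      nlinarith [cw_le_one hα (imax α σ), cl_pos hα (imax α σ)]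
    push_cast at hps ⊢
    nlinarith
  have t1 : ((M:ℝ)+1) * LVal α σ (imax α σ)
      ≤ ∑ j ∈ G, ((M:ℝ)+1) * (cw α j ^ M * (cl α j * LVal α σ (imax α σ))) := by
    have e : ∑ j ∈ G, ((M:ℝ)+1) * (cw α j ^ M * (cl α j * LVal α σ (imax α σ)))
        = ((M:ℝ)+1) * ((∑ j ∈ G, cw α j ^ M * cl α j) * LVal α σ (imax α σ)) := by
      rw [Finset.sum_mul, Finset.mul_sum]
      exact Finset.sum_congr rfl fun j _ => by ring
    rw [e]
    have hSL : (0:ℝ) ≤ ((∑ j ∈ G, cw α j ^ M * cl α j) - 1) * LVal α σ (imax α σ) :=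
      mul_nonneg (by linarith) hL
    have hexp : ((M:ℝ)+1) * ((∑ j ∈ G, cw α j ^ M * cl α j) * LVal α σ (imax α σ))
        - ((M:ℝ)+1) * LVal α σ (imax α σ)
        = ((M:ℝ)+1) * (((∑ j ∈ G, cw α j ^ M * cl α j) - 1) * LVal α σ (imax α σ)) := by ring
    have hnn : (0:ℝ) ≤ ((M:ℝ)+1) * (((∑ j ∈ G, cw α j ^ M * cl α j) - 1) * LVal α σ (imax α σ)) :=
      mul_nonneg (by positivity) hSL
    linarith
  have t2 : ∑ j ∈ G, ((M:ℝ)+1) * (cw α j ^ M * (cl α j * LVal α σ (imax α σ)))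
      ≤ ∑ j ∈ G, ((sVal α σ j + LVal α σ j) ^ (M+1) - sVal α σ j ^ (M+1)) := by
    apply Finset.sum_le_sum
    intro j hj
    have e1 : cl α j * LVal α σ (imax α σ) ≤ LVal α σ j := h3 j (imax α σ)
    have hsj : (0:ℝ) ≤ sVal α σ j := le_trans (cw_pos hα j).le (h1 j)
    have e2 : cw α j ^ M ≤ sVal α σ j ^ M := pow_le_pow_left₀ (cw_pos hα j).le (h1 j) M
    have e4 := le_add_pow M hsj (LVal_pos hα σ j).le
    have e5 : ((M:ℝ)+1) * (cw α j ^ M * (cl α j * LVal α σ (imax α σ)))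
        ≤ ((M:ℝ)+1) * (sVal α σ j ^ M * LVal α σ j) := by
      apply mul_le_mul_of_nonneg_left _ (by positivity)
      calc cw α j ^ M * (cl α j * LVal α σ (imax α σ))
          ≤ cw α j ^ M * LVal α σ j :=
            mul_le_mul_of_nonneg_left e1 (pow_nonneg (cw_pos hα j).le M)
        _ ≤ sVal α σ j ^ M * LVal α σ j :=
            mul_le_mul_of_nonneg_right e2 (LVal_pos hα σ j).le
    push_cast at e4 ⊢
    linarith
  have t3 : ∑ j ∈ G, ((sVal α σ j + LVal α σ j) ^ (M+1) - sVal α σ j ^ (M+1))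
      ≤ ∑ j ∈ Finset.univ.erase (imax α σ),
          ((sVal α σ j + LVal α σ j) ^ (M+1) - sVal α σ j ^ (M+1)) := by
    apply Finset.sum_le_sum_of_subset_of_nonneg
    · intro j hj
      refine Finset.mem_erase.2 ⟨?_, Finset.mem_univ j⟩
      rintro rfl; exact hiG hj
    · intro j _ _
      have hsj : (0:ℝ) ≤ sVal α σ j := le_trans (cw_pos hα j).le (h1 j)
      have : sVal α σ j ^ (M+1) ≤ (sVal α σ j + LVal α σ j) ^ (M+1) :=
        pow_le_pow_left₀ hsj (by linarith [(LVal_pos hα σ j).le]) _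
      linarith
  linarith

lemma bounds_step (T : ℝ) (σ : St ι) (h : Inv α σ)
    (Hgrp : ∀ i : ι, ∃ G : Finset ι, i ∉ G ∧ 1 ≤ ∑ j ∈ G, cw α j ^ M * cl α j)
    (hlow : lowB α M σ ≤ T) (hupp : T ≤ uppB α M σ) :
    lowB α M (step α M T σ) ≤ T ∧ T ≤ uppB α M (step α M T σ) := by
  have hOld : Inv α σ := h
  obtain ⟨h1, h2, h3⟩ := h
  have hsum : cw α (imax α σ) + cl α (imax α σ) = 1 := cw_add_cl _
  -- splitting of the four sums at `imax`
  have low_split : lowB α M σ = sVal α σ (imax α σ) ^ (M+1)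
      + ∑ j ∈ Finset.univ.erase (imax α σ), sVal α σ j ^ (M+1) :=
    (Finset.add_sum_erase _ _ (Finset.mem_univ _)).symm
  have upp_split : uppB α M σ = (sVal α σ (imax α σ) + LVal α σ (imax α σ)) ^ (M+1)
      + ∑ j ∈ Finset.univ.erase (imax α σ), (sVal α σ j + LVal α σ j) ^ (M+1) :=
    (Finset.add_sum_erase _ _ (Finset.mem_univ _)).symm
  have low_split' : lowB α M (step α M T σ) = sVal α (step α M T σ) (imax α σ) ^ (M+1)
      + ∑ j ∈ Finset.univ.erase (imax α σ), sVal α σ j ^ (M+1) := by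
    rw [lowB, ← Finset.add_sum_erase _ _ (Finset.mem_univ (imax α σ))]
    congr 1
    exact Finset.sum_congr rfl fun j hj => by
      rw [step_sVal_ne T σ (Finset.mem_erase.1 hj).1]
  have upp_split' : uppB α M (step α M T σ)
      = (sVal α (step α M T σ) (imax α σ) + LVal α (step α M T σ) (imax α σ)) ^ (M+1)
      + ∑ j ∈ Finset.univ.erase (imax α σ), (sVal α σ j + LVal α σ j) ^ (M+1) := by
    rw [uppB, ← Finset.add_sum_erase _ _ (Finset.mem_univ (imax α σ))]
    congr 1
    exact Finset.sum_congr rfl fun j hj => by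
      rw [step_sVal_ne T σ (Finset.mem_erase.1 hj).1, step_LVal_ne T σ (Finset.mem_erase.1 hj).1]
  by_cases hb : T ≤ U0 α M σ
  · have hsv : sVal α (step α M T σ) (imax α σ) = sVal α σ (imax α σ) := by
      rw [step_sVal_eq, if_pos hb, add_zero]
    constructor
    · rw [low_split', hsv, ← low_split]; exact hlow
    · have : uppB α M (step α M T σ) = U0 α M σ := by
        rw [upp_split', hsv, step_LVal_eq, U0, upp_split]
        ring
      rw [this]; exact hb
  · have hsv : sVal α (step α M T σ) (imax α σ)
        = sVal α σ (imax α σ) + cw α (imax α σ) * LVal α σ (imax α σ) := by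
      rw [step_sVal_eq, if_neg hb]
    constructor
    · obtain ⟨G, hiG, hG⟩ := Hgrp (imax α σ)
      have key := gap_le_slack hα σ hOld G hiG hG
      have hsub : ∑ j ∈ Finset.univ.erase (imax α σ),
            ((sVal α σ j + LVal α σ j) ^ (M+1) - sVal α σ j ^ (M+1))
          = ∑ j ∈ Finset.univ.erase (imax α σ), (sVal α σ j + LVal α σ j) ^ (M+1)
            - ∑ j ∈ Finset.univ.erase (imax α σ), sVal α σ j ^ (M+1) :=
        Finset.sum_sub_distrib _ _
      have hU0 : U0 α M σ = (sVal α σ (imax α σ) + cl α (imax α σ) * LVal α σ (imax α σ)) ^ (M+1)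
          + ∑ j ∈ Finset.univ.erase (imax α σ), (sVal α σ j + LVal α σ j) ^ (M+1) := by
        rw [U0, upp_split]; ring
      rw [low_split', hsv]
      push_neg at hb
      rw [hsub] at key
      linarith [hU0, key, hb]
    · have : uppB α M (step α M T σ) = uppB α M σ := by
        rw [upp_split', hsv, step_LVal_eq, upp_split]
        congr 1
        have : sVal α σ (imax α σ) + cw α (imax α σ) * LVal α σ (imax α σ)
            + cl α (imax α σ) * LVal α σ (imax α σ)
            = sVal α σ (imax α σ) + LVal α σ (imax α σ) := by
          linear_combination LVal α σ (imax α σ) * hsum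
        rw [this]
      rw [this]; exact hupp

omit hα in
lemma sVal_init (i : ι) : sVal α (init (ι := ι)) i = cw α i := by
  unfold sVal init; simp

omit hα in
lemma LVal_init (i : ι) : LVal α (init (ι := ι)) i = cl α i := by
  unfold LVal init; simp

omit hα in
lemma evol_succ (T : ℝ) (t : ℕ) :
    evol α M T (t+1) = step α M T (evol α M T t) :=
  Function.iterate_succ_apply' _ _ _

lemma inv_evol (T : ℝ) (t : ℕ) : Inv α (evol α M T t) := by
  induction t with
  | zero => exact inv_init hα
  | succ t ih => rw [evol_succ]; exact inv_step hα T _ ih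

lemma bounds_evol (T : ℝ)
    (Hgrp : ∀ i : ι, ∃ G : Finset ι, i ∉ G ∧ 1 ≤ ∑ j ∈ G, cw α j ^ M * cl α j)
    (hlow : lowB α M (init (ι := ι)) ≤ T) (hupp : T ≤ uppB α M (init (ι := ι))) (t : ℕ) :
    lowB α M (evol α M T t) ≤ T ∧ T ≤ uppB α M (evol α M T t) := by
  induction t with
  | zero => exact ⟨hlow, hupp⟩
  | succ t ih => rw [evol_succ]; exact bounds_step hα T _ (inv_evol hα T t) Hgrp ih.1 ih.2

omit hα in
lemma step_E_lt (T : ℝ) (σ : St ι) {i : ι} {k : ℕ} (hk : k < σ.K i) :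
    (step α M T σ).E i k = σ.E i k := by
  by_cases hi : i = imax α σ
  · rw [hi] at hk ⊢
    have hE : (step α M T σ).E (imax α σ)
        = Function.update (σ.E (imax α σ)) (σ.K (imax α σ))
            (if T ≤ U0 α M σ then false else true) := Function.update_self _ _ _
    rw [hE, Function.update_of_ne (Nat.ne_of_lt hk)]
  · rw [step_E_ne T σ hi]

omit hα in
lemma K_mono (T : ℝ) {t t' : ℕ} (h : t ≤ t') (i : ι) :
    (evol α M T t).K i ≤ (evol α M T t').K i := by
  induction t', h using Nat.le_induction with
  | base => exact le_rfl
  | succ t' ht ih =>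
    refine le_trans ih ?_
    rw [evol_succ]
    by_cases hi : i = imax α (evol α M T t')
    · rw [hi, step_K_eq]; omega
    · rw [step_K_ne T _ hi]

omit hα in
lemma E_stable (T : ℝ) {t t' : ℕ} (h : t ≤ t') {i : ι} {k : ℕ}
    (hk : k < (evol α M T t).K i) :
    (evol α M T t').E i k = (evol α M T t).E i k := by
  induction t', h using Nat.le_induction with
  | base => rfl
  | succ t' ht ih =>
    have hk' : k < (evol α M T t').K i := lt_of_lt_of_le hk (K_mono T ht i)
    rw [evol_succ, step_E_lt T _ hk', ih]

lemma all_small (T : ℝ) (δ : ℝ) (hδ : 0 < δ) :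
    ∃ t, ∀ j, LVal α (evol α M T t) j ≤ δ := by
  classical
  obtain ⟨i₀, hfib⟩ := Finite.exists_infinite_fiber (fun t => imax α (evol α M T t))
  have hfib' : ((fun t => imax α (evol α M T t)) ⁻¹' {i₀}).Infinite :=
    Set.infinite_coe_iff.1 hfib
  -- for every `c` there is a time in the fiber with `K i₀ ≥ c`
  have claimA : ∀ c : ℕ, ∃ t, imax α (evol α M T t) = i₀ ∧ c ≤ (evol α M T t).K i₀ := by
    intro c
    induction c with
    | zero =>
      obtain ⟨t, ht⟩ := hfib'.nonempty
      exact ⟨t, ht, Nat.zero_le _⟩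
    | succ c ih =>
      obtain ⟨t, hti, htK⟩ := ih
      obtain ⟨t', ht', htt'⟩ := hfib'.exists_gt t
      refine ⟨t', ht', ?_⟩
      have h1 : (evol α M T (t+1)).K i₀ = (evol α M T t).K i₀ + 1 := by
        rw [evol_succ, ← hti, step_K_eq]
      have h2 : (evol α M T (t+1)).K i₀ ≤ (evol α M T t').K i₀ := K_mono T (by omega) i₀
      omega
  obtain ⟨c, hc⟩ := exists_pow_lt_of_lt_one hδ (cl_lt_one hα i₀)
  obtain ⟨t, hti, htK⟩ := claimA c
  refine ⟨t, fun j => ?_⟩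
  have h1 : LVal α (evol α M T t) j ≤ LVal α (evol α M T t) i₀ := by
    rw [← hti]; exact imax_spec α _ j
  have h2 : LVal α (evol α M T t) i₀ ≤ cl α i₀ ^ c :=
    pow_le_pow_of_le_one (cl_pos hα i₀).le (cl_lt_one hα i₀).le htK
  linarith

lemma K_unbounded (T : ℝ) (i : ι) (k : ℕ) : ∃ t, k < (evol α M T t).K i := by
  obtain ⟨t, ht⟩ := all_small hα T (cl α i ^ (k+1)) (pow_pos (cl_pos hα i) _)
  refine ⟨t, ?_⟩
  by_contra hcon
  push_neg at hcon
  have h1 : cl α i ^ k ≤ cl α i ^ ((evol α M T t).K i) :=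
    pow_le_pow_of_le_one (cl_pos hα i).le (cl_lt_one hα i).le hcon
  have h2 : cl α i ^ (k+1) < cl α i ^ k :=
    pow_lt_pow_right_of_lt_one₀ (cl_pos hα i) (cl_lt_one hα i) (by omega)
  have h3 := ht i
  rw [LVal] at h3
  linarith

theorem greedy_main (T : ℝ)
    (Hgrp : ∀ i : ι, ∃ G : Finset ι, i ∉ G ∧ 1 ≤ ∑ j ∈ G, cw α j ^ M * cl α j)
    (hlow : ∑ i, cw α i ^ (M+1) ≤ T) (hupp : T ≤ (Fintype.card ι : ℝ)) :
    ∃ c : ι → ℝ, (∀ i, c i ∈ centralCantor (α i)) ∧ T = ∑ i, c i ^ (M+1) := by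
  classical
  have hlow0 : lowB α M (init (ι := ι)) ≤ T := by
    calc lowB α M (init (ι := ι)) = ∑ i, cw α i ^ (M+1) :=
          Finset.sum_congr rfl fun i _ => by rw [sVal_init]
      _ ≤ T := hlow
  have hupp0 : T ≤ uppB α M (init (ι := ι)) := by
    have he : uppB α M (init (ι := ι)) = (Fintype.card ι : ℝ) := by
      calc uppB α M (init (ι := ι)) = ∑ _i : ι, (1:ℝ) :=
            Finset.sum_congr rfl fun i _ => by rw [sVal_init, LVal_init, cw_add_cl, one_pow]
        _ = (Fintype.card ι : ℝ) := by
            rw [Finset.sum_const, Finset.card_univ, nsmul_eq_mul, mul_one]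
    rw [he]; exact hupp
  choose tf htf using fun i k => K_unbounded hα T i k
  set εd : ι → ℕ → Bool := fun i k => (evol α M T (tf i k)).E i k with hεd
  have stab : ∀ (t : ℕ) (i : ι) (k : ℕ), k < (evol α M T t).K i →
      (evol α M T t).E i k = εd i k := by
    intro t i k hk
    rcases le_total t (tf i k) with h | h
    · exact (E_stable T h hk).symm
    · exact E_stable T h (htf i k)
  set g : ι → ℕ → ℝ := fun i k => (if εd i k then (1:ℝ) else 0) * cw α i * cl α i ^ k with hg
  have hg_nonneg : ∀ i k, 0 ≤ g i k := by
    intro i k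
    rw [hg]; dsimp only
    split
    · exact mul_nonneg (mul_nonneg (by norm_num) (cw_pos hα i).le)
        (pow_nonneg (cl_pos hα i).le k)
    · simp
  have hg_le : ∀ i k, g i k ≤ cw α i * cl α i ^ k := by
    intro i k
    rw [hg]; dsimp only
    split
    · rw [one_mul]
    · rw [zero_mul, zero_mul]
      exact mul_nonneg (cw_pos hα i).le (pow_nonneg (cl_pos hα i).le k)
  have hg_le' : ∀ i k, g i k ≤ cl α i ^ k := by
    intro i k
    refine le_trans (hg_le i k) ?_
    calc cw α i * cl α i ^ k ≤ 1 * cl α i ^ k :=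
          mul_le_mul_of_nonneg_right (cw_le_one hα i) (pow_nonneg (cl_pos hα i).le k)
      _ = cl α i ^ k := one_mul _
  have hsummable : ∀ i, Summable (g i) := fun i =>
    Summable.of_nonneg_of_le (hg_nonneg i) (hg_le' i)
      (summable_geometric_of_lt_one (cl_pos hα i).le (cl_lt_one hα i))
  set c : ι → ℝ := fun i => ∑' k, g i k with hc
  have hc_nonneg : ∀ i, 0 ≤ c i := fun i => tsum_nonneg (hg_nonneg i)
  have hpart : ∀ t i, sVal α (evol α M T t) i
      = ∑ k ∈ Finset.range ((evol α M T t).K i), g i k := by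
    intro t i
    unfold sVal
    refine Finset.sum_congr rfl fun k hk => ?_
    rw [hg]; dsimp only
    rw [stab t i k (Finset.mem_range.1 hk)]
  have htail : ∀ t i, sVal α (evol α M T t) i ≤ c i ∧
      c i ≤ sVal α (evol α M T t) i + LVal α (evol α M T t) i := by
    intro t i
    have hsplit : ∑ k ∈ Finset.range ((evol α M T t).K i), g i k
        + ∑' k, g i (k + (evol α M T t).K i) = ∑' k, g i k :=
      (hsummable i).sum_add_tsum_nat_add _
    have htails : Summable (fun k => g i (k + (evol α M T t).K i)) :=
      (summable_nat_add_iff _).2 (hsummable i)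
    have hgeo : Summable (fun k => (cw α i * cl α i ^ ((evol α M T t).K i)) * cl α i ^ k) :=
      (summable_geometric_of_lt_one (cl_pos hα i).le (cl_lt_one hα i)).mul_left _
    have h0 : 0 ≤ ∑' k, g i (k + (evol α M T t).K i) := tsum_nonneg fun k => hg_nonneg i _
    have hub : ∑' k, g i (k + (evol α M T t).K i) ≤ cl α i ^ ((evol α M T t).K i) := by
      have h1 : ∀ k, g i (k + (evol α M T t).K i)
          ≤ (cw α i * cl α i ^ ((evol α M T t).K i)) * cl α i ^ k := by
        intro k
        refine le_trans (hg_le i _) ?_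
        rw [pow_add]; ring_nf
        exact le_rfl
      calc ∑' k, g i (k + (evol α M T t).K i)
          ≤ ∑' k, (cw α i * cl α i ^ ((evol α M T t).K i)) * cl α i ^ k :=
            Summable.tsum_le_tsum h1 htails hgeo
        _ = (cw α i * cl α i ^ ((evol α M T t).K i)) * (1 - cl α i)⁻¹ := by
            rw [tsum_mul_left, tsum_geometric_of_lt_one (cl_pos hα i).le (cl_lt_one hα i)]
        _ = cl α i ^ ((evol α M T t).K i) := by
            have hcw : (1:ℝ) - cl α i = cw α i := by unfold cw cl; ring
            rw [hcw]
            rw [mul_comm (cw α i), mul_assoc, mul_inv_cancel₀ (cw_pos hα i).ne', mul_one]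
    have hL : LVal α (evol α M T t) i = cl α i ^ ((evol α M T t).K i) := rfl
    constructor
    · rw [hc]; dsimp only
      rw [← hsplit, hpart t i]
      linarith
    · rw [hc]; dsimp only
      rw [← hsplit, hpart t i, hL]
      linarith
  have hsand : ∀ t, lowB α M (evol α M T t) ≤ ∑ i, c i ^ (M+1)
      ∧ ∑ i, c i ^ (M+1) ≤ uppB α M (evol α M T t) := by
    intro t
    obtain ⟨h1, h2, h3⟩ := inv_evol hα T t
    constructor
    · refine Finset.sum_le_sum fun i _ => ?_
      exact pow_le_pow_left₀ (le_trans (cw_pos hα i).le (h1 i)) (htail t i).1 _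
    · refine Finset.sum_le_sum fun i _ => ?_
      exact pow_le_pow_left₀ (hc_nonneg i) (htail t i).2 _
  have hdiff : ∀ t, uppB α M (evol α M T t) - lowB α M (evol α M T t)
      ≤ ∑ i, ((M:ℝ)+1) * LVal α (evol α M T t) i := by
    intro t
    obtain ⟨h1, h2, h3⟩ := inv_evol hα T t
    rw [uppB, lowB, ← Finset.sum_sub_distrib]
    refine Finset.sum_le_sum fun i _ => ?_
    have hs0 : 0 ≤ sVal α (evol α M T t) i := le_trans (cw_pos hα i).le (h1 i)
    have hLp := (LVal_pos hα (evol α M T t) i).le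
    have hps := pow_sub_pow_le (M+1) hs0 (by linarith) (h2 i)
    push_cast at hps ⊢
    have he : sVal α (evol α M T t) i + LVal α (evol α M T t) i - sVal α (evol α M T t) i
        = LVal α (evol α M T t) i := by ring
    rw [he] at hps
    linarith
  have key : ∀ ε > 0, dist (∑ i, c i ^ (M+1)) T ≤ ε := by
    intro ε hε
    have hN : (0:ℝ) ≤ (Fintype.card ι : ℝ) := Nat.cast_nonneg _
    have hM1 : (0:ℝ) < (M:ℝ)+1 := by positivity
    have hN1 : (0:ℝ) < (Fintype.card ι : ℝ)+1 := by linarith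
    set δ := ε / (((M:ℝ)+1) * ((Fintype.card ι : ℝ)+1)) with hδdef
    have hδ : 0 < δ := by positivity
    obtain ⟨t, ht⟩ := all_small hα T δ hδ
    have h1 := (hsand t).1
    have h2 := (hsand t).2
    have h3 := (bounds_evol hα T Hgrp hlow0 hupp0 t).1
    have h4 := (bounds_evol hα T Hgrp hlow0 hupp0 t).2
    have h5 : ∑ i, ((M:ℝ)+1) * LVal α (evol α M T t) i ≤ ∑ _i : ι, ((M:ℝ)+1) * δ :=
      Finset.sum_le_sum fun i _ => mul_le_mul_of_nonneg_left (ht i) (by positivity)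
    have h6 : ∑ _i : ι, ((M:ℝ)+1) * δ = (Fintype.card ι : ℝ) * (((M:ℝ)+1) * δ) := by
      rw [Finset.sum_const, Finset.card_univ, nsmul_eq_mul]
    have h7 : (Fintype.card ι : ℝ) * (((M:ℝ)+1) * δ) ≤ ε := by
      rw [hδdef]
      rw [div_eq_mul_inv]
      rw [show ((M:ℝ)+1) * (ε * (((M:ℝ)+1) * ((Fintype.card ι : ℝ)+1))⁻¹)
          = ε * (((M:ℝ)+1) * (((M:ℝ)+1) * ((Fintype.card ι : ℝ)+1))⁻¹) by ring]
      rw [mul_inv]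
      rw [show ((M:ℝ)+1) * (((M:ℝ)+1)⁻¹ * ((Fintype.card ι : ℝ)+1)⁻¹)
          = (((M:ℝ)+1) * ((M:ℝ)+1)⁻¹) * ((Fintype.card ι : ℝ)+1)⁻¹ by ring]
      rw [mul_inv_cancel₀ hM1.ne', one_mul]
      rw [show (Fintype.card ι : ℝ) * (ε * ((Fintype.card ι : ℝ)+1)⁻¹)
          = ε * ((Fintype.card ι : ℝ) * ((Fintype.card ι : ℝ)+1)⁻¹) by ring]
      have hfrac : (Fintype.card ι : ℝ) * ((Fintype.card ι : ℝ)+1)⁻¹ ≤ 1 := by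
        rw [← div_eq_mul_inv, div_le_one hN1]; linarith
      nlinarith
    have hdd := hdiff t
    rw [Real.dist_eq, abs_sub_le_iff]
    constructor <;> linarith
  have hfinal : ∑ i, c i ^ (M+1) = T := eq_of_forall_dist_le key
  refine ⟨c, fun i => ?_, hfinal.symm⟩
  refine ⟨fun k => if εd i k then (1:ℝ) else 0, fun k => by by_cases h : εd i k <;> simp [h], ?_⟩
  rw [hc]; dsimp only
  rfl

end WithHyp

end Greedy

lemma sum_fin_filter_shift (q c0 : ℕ) (f : ℕ → ℝ) :
    ∑ i ∈ Finset.univ.filter (fun i : Fin q => c0 ≤ (i:ℕ)), f ((i:ℕ)+1)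
      = ∑ i ∈ Finset.Icc (c0+1) q, f i := by
  refine Finset.sum_bij' (fun a _ => (a:ℕ)+1)
    (fun b hb => ⟨b-1, by have := Finset.mem_Icc.1 hb; omega⟩) ?_ ?_ ?_ ?_ ?_
  · intro a ha
    have h1 := (Finset.mem_filter.1 ha).2
    have h2 := a.isLt
    exact Finset.mem_Icc.2 ⟨by omega, by omega⟩
  · intro b hb
    have h1 := Finset.mem_Icc.1 hb
    refine Finset.mem_filter.2 ⟨Finset.mem_univ _, ?_⟩
    simp only
    omega
  · intro a ha
    have := a.isLt
    exact Fin.ext (by simp only; omega)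
  · intro b hb
    have h1 := Finset.mem_Icc.1 hb
    simp only
    omega
  · intro a ha
    rfl

lemma sum_fin_shift (q : ℕ) (f : ℕ → ℝ) :
    ∑ i : Fin q, f ((i:ℕ)+1) = ∑ i ∈ Finset.Icc 1 q, f i := by
  have h0 : Finset.univ.filter (fun i : Fin q => 0 ≤ (i:ℕ)) = Finset.univ :=
    Finset.filter_true_of_mem fun i _ => Nat.zero_le _
  have := sum_fin_filter_shift q 0 f
  rw [h0] at this
  rw [this]

lemma Icc_split_one (q : ℕ) (hq : 1 ≤ q) (f : ℕ → ℝ) :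
    ∑ i ∈ Finset.Icc 1 q, f i = f 1 + ∑ i ∈ Finset.Icc 2 q, f i := by
  rw [show Finset.Icc 2 q = Finset.Ioc 1 q from Finset.Icc_add_one_left_eq_Ioc 1 q,
    ← Finset.Icc_erase_left]
  exact (Finset.add_sum_erase _ f (Finset.mem_Icc.2 ⟨le_rfl, hq⟩)).symm

lemma sum_le_card_real (s : Finset ℕ) (f : ℕ → ℝ) (h : ∀ i ∈ s, f i ≤ 1) :
    ∑ i ∈ s, f i ≤ (s.card : ℝ) := by
  calc ∑ i ∈ s, f i ≤ s.card • (1:ℝ) := Finset.sum_le_card_nsmul s f 1 h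
    _ = (s.card : ℝ) := by rw [nsmul_eq_mul, mul_one]


end CantorGreedy

/-- Theorem 4: sums of `m`-th powers of elements of distinct central Cantor sets
`C_{α_1}, …, C_{α_n}, C_{β_1}, …, C_{β_p}` contain a closed interval. -/
theorem sums_of_distinct_cantor_sets (m : ℕ) (hm : 0 < m)
    (n p n₁ n₂ r₁ r₂ : ℕ) (hn₁ : 0 < n₁) (hn₂ : 0 < n₂) (hr₁ : 0 < r₁) (hr₂ : 0 < r₂)
    (hn : n = n₁ + n₂) (hp : p = r₁ + r₂)
    (a b : ℕ → ℝ)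
    (ha : ∀ i ∈ Finset.Icc 1 n, a i ∈ Set.Ioo (0 : ℝ) 1)
    (hb : ∀ i ∈ Finset.Icc 1 p, b i ∈ Set.Ioo (0 : ℝ) 1)
    (haMono : ∀ i j, 1 ≤ i → i ≤ j → j ≤ n → a j ≤ a i)
    (hbMono : ∀ i j, 1 ≤ i → i ≤ j → j ≤ p → b j ≤ b i)
    (hab : a 1 = b 1)
    (hβ₁ : ∑ j ∈ Finset.Icc 1 r₁, ((1 + b j) / 2) ^ (m - 1) * ((1 - b j) / 2) ^ 2
            > (3 * b 1 - 1) / (1 + b 1))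
    (hβ₂ : ∑ j ∈ Finset.Icc (r₁ + 1) (r₁ + r₂), ((1 + b j) / 2) ^ (m - 1) * ((1 - b j) / 2)
            > 1)
    (hα₁ : ∑ j ∈ Finset.Icc 1 n₁, ((1 + a j) / 2) ^ (m - 1) * ((1 - a j) / 2) ^ 2
            > (3 * a 1 - 1) / (1 + a 1))
    (hα₂ : ∑ j ∈ Finset.Icc (n₁ + 1) (n₁ + n₂), ((1 + a j) / 2) ^ (m - 1) * ((1 - a j) / 2)
            > 1) :
    Set.Icc
      ((∑ i ∈ Finset.Icc 2 n, ((1 + a i) / 2) ^ m) + (p : ℝ) - 1 + 2 * ((1 + b 1) / 2) ^ m)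
      ((∑ i ∈ Finset.Icc 2 n, ((1 + a i) / 2) ^ m) + (p : ℝ) + 1)
      ⊆ {x : ℝ | ∃ c d : ℕ → ℝ,
          (∀ i ∈ Finset.Icc 1 n, c i ∈ centralCantor (a i)) ∧
          (∀ i ∈ Finset.Icc 1 p, d i ∈ centralCantor (b i)) ∧
          x = (∑ i ∈ Finset.Icc 1 n, c i ^ m) + ∑ i ∈ Finset.Icc 1 p, d i ^ m} := by
  intro T hT
  obtain ⟨hTlo, hThi⟩ := hT
  obtain ⟨M, rfl⟩ : ∃ M, m = M + 1 := ⟨m - 1, by omega⟩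
  simp only [Nat.add_sub_cancel] at hβ₂ hα₂
  rw [← hp] at hβ₂
  rw [← hn] at hα₂
  have hn2 : 2 ≤ n := by omega
  have hp2 : 2 ≤ p := by omega
  haveI : Nonempty (Fin n ⊕ Fin p) := ⟨Sum.inl ⟨0, by omega⟩⟩
  set A : Fin n ⊕ Fin p → ℝ :=
    Sum.elim (fun i => a ((i:ℕ)+1)) (fun j => b ((j:ℕ)+1)) with hAdef
  have hA : ∀ x, A x ∈ Set.Ioo (0:ℝ) 1 := by
    rintro (i | j)
    · exact ha _ (Finset.mem_Icc.2 ⟨by omega, by have := i.isLt; omega⟩)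
    · exact hb _ (Finset.mem_Icc.2 ⟨by omega, by have := j.isLt; omega⟩)
  set G1 : Finset (Fin n ⊕ Fin p) :=
    (Finset.univ.filter (fun j : Fin p => r₁ ≤ (j:ℕ))).map ⟨Sum.inr, Sum.inr_injective⟩
    with hG1def
  set G2 : Finset (Fin n ⊕ Fin p) :=
    (Finset.univ.filter (fun i : Fin n => n₁ ≤ (i:ℕ))).map ⟨Sum.inl, Sum.inl_injective⟩
    with hG2def
  have hG1sum : 1 ≤ ∑ x ∈ G1, CantorGreedy.cw A x ^ M * CantorGreedy.cl A x := by
    rw [hG1def, Finset.sum_map]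
    have he : ∑ j ∈ Finset.univ.filter (fun j : Fin p => r₁ ≤ (j:ℕ)),
        CantorGreedy.cw A ((⟨Sum.inr, Sum.inr_injective⟩ : Fin p ↪ Fin n ⊕ Fin p) j) ^ M
          * CantorGreedy.cl A ((⟨Sum.inr, Sum.inr_injective⟩ : Fin p ↪ Fin n ⊕ Fin p) j)
        = ∑ j ∈ Finset.univ.filter (fun j : Fin p => r₁ ≤ (j:ℕ)),
            (fun x => ((1 + b x)/2) ^ M * ((1 - b x)/2)) ((j:ℕ)+1) :=
      Finset.sum_congr rfl fun j _ => rfl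
    rw [he, CantorGreedy.sum_fin_filter_shift p r₁ (fun x => ((1 + b x)/2) ^ M * ((1 - b x)/2))]
    exact le_of_lt hβ₂
  have hG2sum : 1 ≤ ∑ x ∈ G2, CantorGreedy.cw A x ^ M * CantorGreedy.cl A x := by
    rw [hG2def, Finset.sum_map]
    have he : ∑ i ∈ Finset.univ.filter (fun i : Fin n => n₁ ≤ (i:ℕ)),
        CantorGreedy.cw A ((⟨Sum.inl, Sum.inl_injective⟩ : Fin n ↪ Fin n ⊕ Fin p) i) ^ M
          * CantorGreedy.cl A ((⟨Sum.inl, Sum.inl_injective⟩ : Fin n ↪ Fin n ⊕ Fin p) i)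
        = ∑ i ∈ Finset.univ.filter (fun i : Fin n => n₁ ≤ (i:ℕ)),
            (fun x => ((1 + a x)/2) ^ M * ((1 - a x)/2)) ((i:ℕ)+1) :=
      Finset.sum_congr rfl fun i _ => rfl
    rw [he, CantorGreedy.sum_fin_filter_shift n n₁ (fun x => ((1 + a x)/2) ^ M * ((1 - a x)/2))]
    exact le_of_lt hα₂
  have Hgrp : ∀ x : Fin n ⊕ Fin p, ∃ G : Finset (Fin n ⊕ Fin p),
      x ∉ G ∧ 1 ≤ ∑ j ∈ G, CantorGreedy.cw A j ^ M * CantorGreedy.cl A j := by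
    rintro (i | j)
    · exact ⟨G1, by rw [hG1def]; simp, hG1sum⟩
    · exact ⟨G2, by rw [hG2def]; simp, hG2sum⟩
  have hsum_cw : ∑ x : Fin n ⊕ Fin p, CantorGreedy.cw A x ^ (M+1)
      = (∑ i ∈ Finset.Icc 1 n, ((1 + a i)/2)^(M+1))
        + ∑ j ∈ Finset.Icc 1 p, ((1 + b j)/2)^(M+1) := by
    rw [Fintype.sum_sum_type,
      ← CantorGreedy.sum_fin_shift n (fun x => ((1 + a x)/2)^(M+1)),
      ← CantorGreedy.sum_fin_shift p (fun x => ((1 + b x)/2)^(M+1))]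
    rfl
  have hA_split : ∑ i ∈ Finset.Icc 1 n, ((1 + a i)/2)^(M+1)
      = ((1 + a 1)/2)^(M+1) + ∑ i ∈ Finset.Icc 2 n, ((1 + a i)/2)^(M+1) :=
    CantorGreedy.Icc_split_one n (by omega) _
  have hB_split : ∑ j ∈ Finset.Icc 1 p, ((1 + b j)/2)^(M+1)
      = ((1 + b 1)/2)^(M+1) + ∑ j ∈ Finset.Icc 2 p, ((1 + b j)/2)^(M+1) :=
    CantorGreedy.Icc_split_one p (by omega) _
  have hbd_b : ∑ j ∈ Finset.Icc 2 p, ((1 + b j)/2)^(M+1) ≤ (p:ℝ) - 1 := by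
    have h1 : ∀ j ∈ Finset.Icc 2 p, ((1 + b j)/2)^(M+1) ≤ 1 := by
      intro j hj
      have hjm := Finset.mem_Icc.1 hj
      have hbj := hb j (Finset.mem_Icc.2 ⟨by omega, hjm.2⟩)
      exact pow_le_one₀ (by linarith [hbj.1]) (by linarith [hbj.2])
    have h2 := CantorGreedy.sum_le_card_real _ _ h1
    rw [Nat.card_Icc] at h2
    have hc : ((p + 1 - 2 : ℕ) : ℝ) = (p:ℝ) - 1 := by
      rw [show p + 1 - 2 = p - 1 from by omega, Nat.cast_sub (by omega : 1 ≤ p)]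
      norm_num
    rw [hc] at h2
    exact h2
  have hbd_a : ∑ i ∈ Finset.Icc 2 n, ((1 + a i)/2)^(M+1) ≤ (n:ℝ) - 1 := by
    have h1 : ∀ i ∈ Finset.Icc 2 n, ((1 + a i)/2)^(M+1) ≤ 1 := by
      intro i hi
      have him := Finset.mem_Icc.1 hi
      have hai := ha i (Finset.mem_Icc.2 ⟨by omega, him.2⟩)
      exact pow_le_one₀ (by linarith [hai.1]) (by linarith [hai.2])
    have h2 := CantorGreedy.sum_le_card_real _ _ h1
    rw [Nat.card_Icc] at h2
    have hc : ((n + 1 - 2 : ℕ) : ℝ) = (n:ℝ) - 1 := by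
      rw [show n + 1 - 2 = n - 1 from by omega, Nat.cast_sub (by omega : 1 ≤ n)]
      norm_num
    rw [hc] at h2
    exact h2
  have hT1 : ∑ x : Fin n ⊕ Fin p, CantorGreedy.cw A x ^ (M+1) ≤ T := by
    rw [hsum_cw, hA_split, hB_split, hab]
    linarith
  have hT2 : T ≤ (Fintype.card (Fin n ⊕ Fin p) : ℝ) := by
    have hcard : (Fintype.card (Fin n ⊕ Fin p) : ℝ) = (n:ℝ) + p := by
      rw [Fintype.card_sum, Fintype.card_fin, Fintype.card_fin]
      push_cast; ring
    rw [hcard]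
    linarith
  obtain ⟨cf, hcf_mem, hcf_sum⟩ := CantorGreedy.greedy_main hA T Hgrp hT1 hT2
  set cfun : ℕ → ℝ := fun i =>
    if h : i ∈ Finset.Icc 1 n then
      cf (Sum.inl ⟨i - 1, by have := Finset.mem_Icc.1 h; omega⟩) else 0 with hcfun
  set dfun : ℕ → ℝ := fun j =>
    if h : j ∈ Finset.Icc 1 p then
      cf (Sum.inr ⟨j - 1, by have := Finset.mem_Icc.1 h; omega⟩) else 0 with hdfun
  refine ⟨cfun, dfun, ?_, ?_, ?_⟩
  · intro i hi
    have him := Finset.mem_Icc.1 hi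
    have hmem := hcf_mem (Sum.inl ⟨i - 1, by omega⟩)
    have hidx : A (Sum.inl (⟨i - 1, by omega⟩ : Fin n)) = a i := by
      rw [hAdef]
      simp only [Sum.elim_inl]
      congr 1
      omega
    rw [hidx] at hmem
    simp only [hcfun, dif_pos hi]
    exact hmem
  · intro j hj
    have hjm := Finset.mem_Icc.1 hj
    have hmem := hcf_mem (Sum.inr ⟨j - 1, by omega⟩)
    have hidx : A (Sum.inr (⟨j - 1, by omega⟩ : Fin p)) = b j := by
      rw [hAdef]
      simp only [Sum.elim_inr]
      congr 1
      omega
    rw [hidx] at hmem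
    simp only [hdfun, dif_pos hj]
    exact hmem
  · have hcs : ∑ i ∈ Finset.Icc 1 n, cfun i ^ (M+1) = ∑ i : Fin n, cf (Sum.inl i) ^ (M+1) := by
      rw [← CantorGreedy.sum_fin_shift n (fun x => cfun x ^ (M+1))]
      refine Finset.sum_congr rfl fun i _ => ?_
      have hmem : (i:ℕ)+1 ∈ Finset.Icc 1 n :=
        Finset.mem_Icc.2 ⟨by omega, by have := i.isLt; omega⟩
      simp only [hcfun, dif_pos hmem, Nat.add_sub_cancel, Fin.eta]
    have hds : ∑ j ∈ Finset.Icc 1 p, dfun j ^ (M+1) = ∑ j : Fin p, cf (Sum.inr j) ^ (M+1) := by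
      rw [← CantorGreedy.sum_fin_shift p (fun x => dfun x ^ (M+1))]
      refine Finset.sum_congr rfl fun j _ => ?_
      have hmem : (j:ℕ)+1 ∈ Finset.Icc 1 p :=
        Finset.mem_Icc.2 ⟨by omega, by have := j.isLt; omega⟩
      simp only [hdfun, dif_pos hmem, Nat.add_sub_cancel, Fin.eta]
    rw [Fintype.sum_sum_type] at hcf_sum
    rw [hcs, hds]
    exact hcf_sum
end
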